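/- arXiv:2508.15319 — 6 statements merged into one kernel-verified Lean document; each statement's English description precedes it below -/
import Mathlib

section
/- Let n ≥ 1 be an integer and suppose m : ℝ → ℝ is twice continuously differentiable, monotone increasing, satisfies m''(x) + m(x) − m(x)^{2n+1} = 0 for all x ∈ ℝ, m(0) = 0, m(x) → 1 as x → +∞ and m(x) → −1 as x → −∞. Then m is infinitely differentiable and there exist constants c, C > 0 such that |m'(x)| ≤ C·e^{−c|x|} for all x ∈ ℝ. -/
open Filter Topology

private lemma AC_incr (n : ℕ) (s : ℝ) :
    s^(2*(n+1)+2) - ((n:ℝ)+1+1)*s^2 + ((n:ℝ)+1)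
      = (s^(2*n+2) - ((n:ℝ)+1)*s^2 + (n:ℝ)) + (1-s^2)^2 * ∑ j ∈ Finset.range (n+1), (s^2)^j := by
  have h := geom_sum_mul (s^2) (n+1)
  have h2 : (s^2)^(n+1) = s^(2*n+2) := by rw [← pow_mul]; ring_nf
  rw [h2] at h
  linear_combination (1 - s^2) * h

/-- Lower bound `(1-s²)² ≤ P_n(s)` for all real `s`, `n ≥ 1`. -/
private lemma AC_low (n : ℕ) (hn : 1 ≤ n) (s : ℝ) :
    (1-s^2)^2 ≤ s^(2*n+2) - ((n:ℝ)+1)*s^2 + (n:ℝ) := by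
  induction n with
  | zero => omega
  | succ k ih =>
    rcases Nat.eq_or_lt_of_le hn with h1 | h1
    · have : k = 0 := by omega
      subst this; norm_num; nlinarith [sq_nonneg s, sq_nonneg (1 - s^2)]
    · have hk : 1 ≤ k := by omega
      have := ih hk
      have hincr := AC_incr k s
      have hs : 0 ≤ (1-s^2)^2 * ∑ j ∈ Finset.range (k+1), (s^2)^j := by
        apply mul_nonneg (sq_nonneg _)
        exact Finset.sum_nonneg fun j _ => pow_nonneg (sq_nonneg s) j
      push_cast at hincr ⊢
      nlinarith

/-- Upper bound `P_n(s) ≤ 2n(n+1)(1-s)²` for `s ∈ [-1,1]`, `n ≥ 1`. -/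
private lemma AC_upp (n : ℕ) (hn : 1 ≤ n) (s : ℝ) (hs1 : -1 ≤ s) (hs2 : s ≤ 1) :
    s^(2*n+2) - ((n:ℝ)+1)*s^2 + (n:ℝ) ≤ 2*n*((n:ℝ)+1)*(1-s)^2 := by
  induction n with
  | zero => omega
  | succ k ih =>
    have hsum : ∀ j : ℕ, (s^2)^j ≤ 1 := fun j => by
      apply pow_le_one₀ (sq_nonneg s); nlinarith
    have hS1 : ∑ j ∈ Finset.range (k+1), (s^2)^j ≤ (k:ℝ)+1 := by
      calc ∑ j ∈ Finset.range (k+1), (s^2)^j ≤ ∑ _j ∈ Finset.range (k+1), (1:ℝ) :=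
            Finset.sum_le_sum fun j _ => hsum j
        _ = (k:ℝ)+1 := by simp
    have hS0 : 0 ≤ ∑ j ∈ Finset.range (k+1), (s^2)^j :=
      Finset.sum_nonneg fun j _ => pow_nonneg (sq_nonneg s) j
    have hfac : (1-s^2)^2 ≤ 4*(1-s)^2 := by
      nlinarith [mul_nonneg (pow_nonneg (by linarith : (0:ℝ) ≤ 1-s) 3) (by linarith : (0:ℝ) ≤ s+3)]
    have hincr := AC_incr k s
    rcases Nat.eq_or_lt_of_le hn with h1 | h1
    · have : k = 0 := by omega
      subst this; norm_num; nlinarith [sq_nonneg (1-s), sq_nonneg (1+s)]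
    · have hk : 1 ≤ k := by omega
      have h2 := ih hk
      push_cast at hincr ⊢
      have hI : (1-s^2)^2 * ∑ j ∈ Finset.range (k+1), (s^2)^j ≤ 4*((k:ℝ)+1)*(1-s)^2 := by
        calc (1-s^2)^2 * ∑ j ∈ Finset.range (k+1), (s^2)^j
            ≤ (1-s^2)^2 * ((k:ℝ)+1) := by
              exact mul_le_mul_of_nonneg_left hS1 (sq_nonneg _)
          _ ≤ 4*(1-s)^2 * ((k:ℝ)+1) := by
              apply mul_le_mul_of_nonneg_right hfac; positivity
          _ = 4*((k:ℝ)+1)*(1-s)^2 := by ring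
      nlinarith [sq_nonneg (1-s)]

private lemma AC_deriv_nonneg {f : ℝ → ℝ} (hf : Monotone f) (hd : Differentiable ℝ f) (x : ℝ) :
    0 ≤ deriv f x := by
  have ht : Tendsto (slope f x) (𝓝[>] x) (𝓝 (deriv f x)) :=
    (hasDerivAt_iff_tendsto_slope.1 (hd x).hasDerivAt).mono_left
      (nhdsWithin_mono x fun y hy => ne_of_gt hy)
  refine ge_of_tendsto ht ?_
  filter_upwards [self_mem_nhdsWithin] with y hy
  have hxy : x < y := hy
  rw [slope_def_field]
  exact div_nonneg (sub_nonneg.2 (hf hxy.le)) (by linarith)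

private lemma AC_keyId (n : ℕ) (m : ℝ → ℝ) (hm : ContDiff ℝ 2 m) (hmono : Monotone m)
    (heq : ∀ x : ℝ, deriv (deriv m) x + m x - m x ^ (2 * n + 1) = 0)
    (htop : Tendsto m atTop (nhds 1)) (hbot : Tendsto m atBot (nhds (-1))) :
    ∀ x, ((n:ℝ)+1) * (deriv m x)^2 = (m x)^(2*n+2) - ((n:ℝ)+1)*(m x)^2 + (n:ℝ) := by
  have hn1 : ((n:ℝ)+1) ≠ 0 := by positivity
  have hd1 : Differentiable ℝ m := hm.differentiable (by norm_num)
  have hd2 : Differentiable ℝ (deriv m) := by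
    have h := (contDiff_succ_iff_deriv (n := 1)).1 (hm.of_le (by norm_num))
    exact h.2.2.differentiable one_ne_zero
  have hder : ∀ x, HasDerivAt m (deriv m x) x := fun x => (hd1 x).hasDerivAt
  have hder2 : ∀ x, HasDerivAt (deriv m) (deriv (deriv m) x) x := fun x => (hd2 x).hasDerivAt
  have hqnn : ∀ x, 0 ≤ deriv m x := AC_deriv_nonneg hmono hd1
  have hub : ∀ x, m x ≤ 1 := fun x => hmono.ge_of_tendsto htop x
  have hlb : ∀ x, -1 ≤ m x := fun x => hmono.le_of_tendsto hbot x
  set E : ℝ → ℝ := fun x => (deriv m x)^2/2 + (m x)^2/2 - (m x)^(2*n+2)/(2*((n:ℝ)+1)) with hEdef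
  have hE : ∀ x, HasDerivAt E 0 x := by
    intro x
    have h1 := ((hder2 x).pow 2).div_const 2
    have h2 := ((hder x).pow 2).div_const 2
    have h3 := ((hder x).pow (2*n+2)).div_const (2*((n:ℝ)+1))
    have h := (h1.add h2).sub h3
    refine h.congr_deriv ?_
    have hx := heq x
    have hq' : deriv (deriv m) x = m x ^ (2*n+1) - m x := by linarith
    rw [hq']
    have hexp : (2*n+2) - 1 = 2*n+1 := by omega
    rw [hexp]
    push_cast
    field_simp
    ring
  have hconst : ∀ x, E x = E 0 :=
    fun x => is_const_of_deriv_eq_zero (fun y => (hE y).differentiableAt) (fun y => (hE y).deriv) x 0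
  have hfeq : ∀ x, (deriv m x)^2 = 2*E 0 - (m x)^2 + (m x)^(2*n+2)/((n:ℝ)+1) := by
    intro x
    have h : (deriv m x)^2/2 + (m x)^2/2 - (m x)^(2*n+2)/(2*((n:ℝ)+1)) = E 0 := hconst x
    field_simp at h ⊢
    linarith
  obtain ⟨l, hldef⟩ : ∃ l : ℝ, l = 2*E 0 - 1 + 1/((n:ℝ)+1) := ⟨_, rfl⟩
  have htendsq : Tendsto (fun x => (deriv m x)^2) atTop (𝓝 l) := by
    have hc : Continuous (fun t : ℝ => 2*E 0 - t^2 + t^(2*n+2)/((n:ℝ)+1)) := by fun_prop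
    have h := (hc.tendsto 1).comp htop
    simp only [Function.comp_def] at h
    have hval : 2*E 0 - (1:ℝ)^2 + (1:ℝ)^(2*n+2)/((n:ℝ)+1) = l := by
      rw [hldef]; norm_num
    rw [hval] at h
    exact h.congr fun x => (hfeq x).symm
  have hl0 : l = 0 := by
    by_contra hne
    have hlnn : 0 ≤ l := ge_of_tendsto htendsq (Eventually.of_forall fun x => sq_nonneg _)
    have hlpos : 0 < l := lt_of_le_of_ne hlnn (Ne.symm hne)
    obtain ⟨d, hddef⟩ : ∃ d : ℝ, d = Real.sqrt (l/2) := ⟨_, rfl⟩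
    have hdpos : 0 < d := hddef ▸ Real.sqrt_pos.2 (by linarith)
    have hev : ∀ᶠ x in atTop, l/2 ≤ (deriv m x)^2 :=
      htendsq.eventually_const_le (by linarith)
    obtain ⟨x₀, hx₀⟩ := eventually_atTop.1 hev
    have hq : ∀ x, x₀ ≤ x → d ≤ deriv m x := by
      intro x hx
      have h1 : d ≤ |deriv m x| := by
        rw [hddef, ← Real.sqrt_sq_eq_abs]
        exact Real.sqrt_le_sqrt (hx₀ x hx)
      rwa [abs_of_nonneg (hqnn x)] at h1
    have hlt : x₀ < x₀ + 8/d := by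
      have : 0 < 8/d := by positivity
      linarith
    obtain ⟨c, hc, hceq⟩ := exists_hasDerivAt_eq_slope m (deriv m) hlt
      hd1.continuous.continuousOn (fun x _ => hder x)
    have h1 : d ≤ deriv m c := hq c hc.1.le
    have h2 : (m (x₀ + 8/d) - m x₀) / (x₀ + 8/d - x₀) ≤ d/4 := by
      have hnum : m (x₀ + 8/d) - m x₀ ≤ 2 := by
        have := hub (x₀ + 8/d); have := hlb x₀; linarith
      have hden : x₀ + 8/d - x₀ = 8/d := by ring
      rw [hden, div_le_iff₀ (by positivity)]
      calc m (x₀ + 8/d) - m x₀ ≤ 2 := hnum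
        _ = d/4 * (8/d) := by field_simp; ring
    rw [hceq] at h1
    linarith
  intro x
  have h := hfeq x
  have h2 : 2*E 0 = 1 - 1/((n:ℝ)+1) := by
    rw [hldef] at hl0; linarith
  rw [h2] at h
  field_simp at h ⊢
  linarith

private lemma AC_sq_le {a b : ℝ} (ha : 0 ≤ a) (hb : 0 ≤ b) (h : a^2 ≤ b^2) : a ≤ b := by
  nlinarith

private lemma AC_oneSided (n : ℕ) (hn : 1 ≤ n) (m : ℝ → ℝ)
    (hm : ContDiff ℝ 2 m) (hmono : Monotone m)
    (heq : ∀ x : ℝ, deriv (deriv m) x + m x - m x ^ (2 * n + 1) = 0)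
    (h0 : m 0 = 0)
    (htop : Tendsto m atTop (nhds 1))
    (hbot : Tendsto m atBot (nhds (-1))) :
    (∀ x, m x < 1) ∧ (∀ x, 0 ≤ x →
      |deriv m x| ≤ Real.sqrt (2*(n:ℝ)) * Real.exp (-(Real.sqrt ((n:ℝ)+1))⁻¹ * x)) := by
  have hid := AC_keyId n m hm hmono heq htop hbot
  have hd1 : Differentiable ℝ m := hm.differentiable (by norm_num)
  have hqnn : ∀ x, 0 ≤ deriv m x := AC_deriv_nonneg hmono hd1
  have hub : ∀ x, m x ≤ 1 := fun x => hmono.ge_of_tendsto htop x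
  have hlb : ∀ x, -1 ≤ m x := fun x => hmono.le_of_tendsto hbot x
  have hm0 : ∀ x, 0 ≤ x → 0 ≤ m x := fun x hx => h0 ▸ hmono hx
  obtain ⟨C, hCdef⟩ : ∃ C : ℝ, C = Real.sqrt (2*(n:ℝ)) := ⟨_, rfl⟩
  have hCpos : 0 < C := hCdef ▸ Real.sqrt_pos.2 (by positivity)
  have hC2 : C^2 = 2*(n:ℝ) := by rw [hCdef]; exact Real.sq_sqrt (by positivity)
  obtain ⟨c, hcdef⟩ : ∃ c : ℝ, c = (Real.sqrt ((n:ℝ)+1))⁻¹ := ⟨_, rfl⟩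
  have hcpos : 0 < c := hcdef ▸ inv_pos.2 (Real.sqrt_pos.2 (by positivity))
  have hc2 : c^2 * ((n:ℝ)+1) = 1 := by
    rw [hcdef, inv_pow, Real.sq_sqrt (by positivity)]
    field_simp
  -- upper bound on the derivative
  have hupp : ∀ x, deriv m x ≤ C * (1 - m x) := by
    intro x
    have hP := AC_upp n hn (m x) (hlb x) (hub x)
    have h2 := hid x
    refine AC_sq_le (hqnn x) (by nlinarith [hub x]) ?_
    have hpos : ((n:ℝ)+1) > 0 := by positivity
    rw [mul_pow, hC2]
    nlinarith [hub x]
  -- lower bound on the derivative, for x ≥ 0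
  have hlow : ∀ x, 0 ≤ x → c * (1 - m x) ≤ deriv m x := by
    intro x hx
    have hP := AC_low n hn (m x)
    have h2 := hid x
    have hm1 : 0 ≤ m x := hm0 x hx
    have hkey : (1 - m x)^2 ≤ ((n:ℝ)+1) * (deriv m x)^2 := by
      nlinarith [hub x, sq_nonneg (1 - m x), sq_nonneg (m x)]
    refine AC_sq_le (by nlinarith [hub x, hcpos.le]) (hqnn x) ?_
    have hc2' : c^2 = 1/((n:ℝ)+1) := by
      have : ((n:ℝ)+1) ≠ 0 := by positivity
      field_simp at hc2 ⊢
      linarith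
    rw [mul_pow, hc2']
    rw [div_mul_eq_mul_div, one_mul, div_le_iff₀ (by positivity)]
    nlinarith
  -- strict upper bound m x < 1
  have hstrict : ∀ x, m x < 1 := by
    have hψd : ∀ x, HasDerivAt (fun x => Real.exp (C*x) * (1 - m x))
        (Real.exp (C*x)*C*(1 - m x) + Real.exp (C*x)*(0 - deriv m x)) x := by
      intro x
      have h1 : HasDerivAt (fun x => Real.exp (C*x)) (Real.exp (C*x)*C) x := by
        simpa using ((hasDerivAt_id x).const_mul C).exp
      exact h1.mul ((hasDerivAt_const x 1).sub (hd1 x).hasDerivAt)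
    have hmonoψ : MonotoneOn (fun x => Real.exp (C*x) * (1 - m x)) (Set.Ici 0) := by
      apply monotoneOn_of_deriv_nonneg (convex_Ici 0)
      · exact fun x _ => (hψd x).differentiableAt.continuousAt.continuousWithinAt
      · exact fun x _ => (hψd x).differentiableAt.differentiableWithinAt
      · intro x hx
        rw [interior_Ici] at hx
        rw [(hψd x).deriv]
        have h1 := hupp x
        have he := Real.exp_pos (C*x)
        nlinarith
    intro x
    rcases le_or_gt 0 x with hx | hx
    · have h1 := hmonoψ (Set.self_mem_Ici) (Set.mem_Ici.2 hx) hx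
      simp only [h0, mul_zero, Real.exp_zero, sub_zero, one_mul] at h1
      have he := Real.exp_pos (C*x)
      nlinarith
    · calc m x ≤ m 0 := hmono hx.le
        _ = 0 := h0
        _ < 1 := one_pos
  refine ⟨hstrict, ?_⟩
  -- Gronwall: exp (c x) * (1 - m x) is antitone on [0, ∞)
  have hφd : ∀ x, HasDerivAt (fun x => Real.exp (c*x) * (1 - m x))
      (Real.exp (c*x)*c*(1 - m x) + Real.exp (c*x)*(0 - deriv m x)) x := by
    intro x
    have h1 : HasDerivAt (fun x => Real.exp (c*x)) (Real.exp (c*x)*c) x := by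
      simpa using ((hasDerivAt_id x).const_mul c).exp
    exact h1.mul ((hasDerivAt_const x 1).sub (hd1 x).hasDerivAt)
  have hanti : AntitoneOn (fun x => Real.exp (c*x) * (1 - m x)) (Set.Ici 0) := by
    apply antitoneOn_of_deriv_nonpos (convex_Ici 0)
    · exact fun x _ => (hφd x).differentiableAt.continuousAt.continuousWithinAt
    · exact fun x _ => (hφd x).differentiableAt.differentiableWithinAt
    · intro x hx
      rw [interior_Ici] at hx
      rw [(hφd x).deriv]
      have h1 := hlow x hx.le
      have he := Real.exp_pos (c*x)
      nlinarith
  intro x hx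
  have h1 : Real.exp (c*x) * (1 - m x) ≤ 1 := by
    have h2 := hanti Set.self_mem_Ici (Set.mem_Ici.2 hx) hx
    simpa [h0] using h2
  have h2 : 1 - m x ≤ Real.exp (-(c*x)) := by
    rw [Real.exp_neg]
    have he := Real.exp_pos (c*x)
    have h4 := mul_le_mul_of_nonneg_left h1 (inv_nonneg.2 he.le)
    rw [← mul_assoc, inv_mul_cancel₀ he.ne', one_mul, mul_one] at h4
    exact h4
  have h3 : |deriv m x| ≤ C * Real.exp (-(c*x)) := by
    rw [abs_of_nonneg (hqnn x)]
    calc deriv m x ≤ C * (1 - m x) := hupp x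
      _ ≤ C * Real.exp (-(c*x)) := by
          exact mul_le_mul_of_nonneg_left h2 hCpos.le
  rw [← hCdef, ← hcdef]
  calc |deriv m x| ≤ C * Real.exp (-(c*x)) := h3
    _ = C * Real.exp (-c*x) := by ring_nf

private lemma AC_reflect (n : ℕ) (m : ℝ → ℝ)
    (hm : ContDiff ℝ 2 m) (hmono : Monotone m)
    (heq : ∀ x : ℝ, deriv (deriv m) x + m x - m x ^ (2 * n + 1) = 0)
    (h0 : m 0 = 0) (htop : Tendsto m atTop (nhds 1)) (hbot : Tendsto m atBot (nhds (-1))) :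
    ContDiff ℝ 2 (fun y => -m (-y)) ∧ Monotone (fun y => -m (-y)) ∧
      (∀ x : ℝ, deriv (deriv (fun y => -m (-y))) x + (fun y => -m (-y)) x
        - ((fun y => -m (-y)) x) ^ (2 * n + 1) = 0) ∧ (fun y => -m (-y)) 0 = 0 ∧
      Tendsto (fun y => -m (-y)) atTop (nhds 1) ∧ Tendsto (fun y => -m (-y)) atBot (nhds (-1)) ∧
      (∀ y, deriv (fun y => -m (-y)) y = deriv m (-y)) := by
  have hd1 : Differentiable ℝ m := hm.differentiable (by norm_num)
  have hd2 : Differentiable ℝ (deriv m) := by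
    have h := (contDiff_succ_iff_deriv (n := 1)).1 (hm.of_le (by norm_num))
    exact h.2.2.differentiable one_ne_zero
  have hdmt : ∀ y, HasDerivAt (fun y => -m (-y)) (deriv m (-y)) y := by
    intro y
    have h1 : HasDerivAt (fun y : ℝ => m (-y)) (deriv m (-y) * (-1)) y :=
      ((hd1 (-y)).hasDerivAt).comp y (hasDerivAt_neg y)
    simpa [Pi.neg_def] using h1.neg
  have hderiv_mt : deriv (fun y => -m (-y)) = fun y => deriv m (-y) :=
    funext fun y => (hdmt y).deriv
  have hdmt2 : ∀ y, HasDerivAt (fun y : ℝ => deriv m (-y)) (-(deriv (deriv m) (-y))) y := by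
    intro y
    have h1 : HasDerivAt (fun y : ℝ => deriv m (-y)) (deriv (deriv m) (-y) * (-1)) y :=
      ((hd2 (-y)).hasDerivAt).comp y (hasDerivAt_neg y)
    simpa using h1
  have hderiv2 : ∀ y, deriv (deriv (fun y => -m (-y))) y = -(deriv (deriv m) (-y)) := by
    intro y
    rw [hderiv_mt]
    exact (hdmt2 y).deriv
  refine ⟨(hm.comp contDiff_neg).neg, ?_, ?_, by simp [h0], ?_, ?_, fun y => by rw [hderiv_mt]⟩
  · intro a b hab
    simp only
    have := hmono (neg_le_neg hab)
    linarith
  · intro x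
    have hodd : Odd (2*n+1) := ⟨n, by ring⟩
    have he := heq (-x)
    simp only [hderiv2 x, hodd.neg_pow (m (-x))]
    linarith
  · have h := (hbot.comp tendsto_neg_atTop_atBot).neg
    simpa using h
  · have h := (htop.comp tendsto_neg_atBot_atTop).neg
    simpa using h


private lemma AC_analyticAt_sqrt {a : ℝ} (ha : 0 < a) : AnalyticAt ℝ Real.sqrt a := by
  have hmem : (a:ℂ) ∈ Complex.slitPlane := by
    simp [Complex.mem_slitPlane_iff, ha]
  have h1 : AnalyticAt ℂ (fun z : ℂ => Complex.exp ((1/2) * Complex.log z)) (a:ℂ) :=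
    ((analyticAt_const.mul (analyticAt_clog hmem))).cexp
  have h2 : AnalyticAt ℝ (fun x : ℝ => (Complex.exp ((1/2) * Complex.log (x:ℂ))).re) a := by
    have h3 : AnalyticAt ℝ (fun z : ℂ => Complex.exp ((1/2) * Complex.log z)) (a:ℂ) :=
      h1.restrictScalars
    have h4 : AnalyticAt ℝ (fun x : ℝ => (x:ℂ)) a := Complex.ofRealCLM.analyticAt a
    have h5 := h3.comp h4
    exact (Complex.reCLM.analyticAt _).comp h5
  apply h2.congr
  filter_upwards [eventually_gt_nhds ha] with x hx
  have hlog : Complex.log (x:ℂ) = (Real.log x : ℂ) := (Complex.ofReal_log hx.le).symm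
  rw [hlog]
  have : (1/2 : ℂ) * (Real.log x : ℂ) = ((Real.log x / 2 : ℝ) : ℂ) := by push_cast; ring
  rw [this, ← Complex.ofReal_exp, Complex.ofReal_re]
  rw [Real.sqrt_eq_rpow, Real.rpow_def_of_pos hx]
  ring_nf

private lemma AC_antideriv {g : ℝ → ℝ} {u₀ : ℝ} (hg : AnalyticAt ℝ g u₀) :
    ∃ G : ℝ → ℝ, AnalyticAt ℝ G u₀ ∧ ∀ᶠ u in 𝓝 u₀, HasDerivAt G (g u) u := by
  obtain ⟨p, r, hp⟩ := hg
  obtain ⟨ρ, hρρ, hρr⟩ := ENNReal.lt_iff_exists_nnreal_btwn.1 hp.r_pos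
  have hρ0 : 0 < ρ := by exact_mod_cast hρρ
  have hρ0' : (0:ℝ) < ρ := hρ0
  have hrad : (↑ρ:ENNReal) < p.radius := lt_of_lt_of_le hρr hp.r_le
  have hsum : Summable (fun k => ‖p k‖ * (ρ:ℝ)^k) := p.summable_norm_mul_pow hrad
  classical
  set b : ℕ → ℝ := fun k => match k with
    | 0 => 0
    | (j+1) => p.coeff j / (j+1) with hbdef
  have hb0 : b 0 = 0 := rfl
  have hbs : ∀ j : ℕ, b (j+1) = p.coeff j / ((j:ℝ)+1) := fun j => by push_cast; rfl
  have hcoeff : ∀ j, |p.coeff j| = ‖p j‖ := fun j => (p.norm_apply_eq_norm_coef).symm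
  have hbsle : ∀ j : ℕ, |b (j+1)| ≤ ‖p j‖ := by
    intro j
    rw [hbs, abs_div, abs_of_nonneg (by positivity : (0:ℝ) ≤ (j:ℝ)+1), ← hcoeff j]
    apply div_le_self (abs_nonneg _) (by linarith [Nat.cast_nonneg (α := ℝ) j])
  set u : ℕ → ℝ := fun k => match k with
    | 0 => 0
    | (j+1) => ‖p j‖ * (ρ:ℝ)^j with hudef
  have hu0 : u 0 = 0 := rfl
  have husum : Summable u := by
    refine (summable_nat_add_iff 1).1 ?_
    exact hsum.congr fun j => rfl
  set G : ℝ → ℝ := fun z => ∑' k, b k * (z - u₀)^k with hGdef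
  -- summability of the series for G
  have hGsum : ∀ y : ℝ, |y| ≤ (ρ:ℝ) → Summable (fun k => b k * y^k) := by
    intro y hy
    refine Summable.of_norm_bounded (husum.mul_left (ρ:ℝ)) ?_
    intro k
    match k with
    | 0 => simp [hb0, hu0]
    | (j+1) =>
      have h1 : ‖b (j+1) * y^(j+1)‖ = |b (j+1)| * |y|^(j+1) := by
        rw [Real.norm_eq_abs, abs_mul, abs_pow]
      rw [h1]
      have h2 : |y|^(j+1) ≤ (ρ:ℝ)^(j+1) := pow_le_pow_left₀ (abs_nonneg _) hy _
      calc |b (j+1)| * |y|^(j+1) ≤ ‖p j‖ * (ρ:ℝ)^(j+1) := by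
            apply mul_le_mul (hbsle j) h2 (by positivity) (norm_nonneg _)
        _ = (ρ:ℝ) * (‖p j‖ * (ρ:ℝ)^j) := by ring
  -- the power series for G
  set q := FormalMultilinearSeries.ofScalars ℝ b with hqdef
  have hqnorm : ∀ k, ‖q k‖ = |b k| := fun k => by
    rw [hqdef, FormalMultilinearSeries.ofScalars_norm, Real.norm_eq_abs]
  have hqrad : (↑ρ:ENNReal) ≤ q.radius := by
    apply q.le_radius_of_summable
    have h := (hGsum (ρ:ℝ) (by rw [abs_of_nonneg hρ0'.le])).abs
    refine h.congr fun k => ?_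
    rw [abs_mul, abs_pow, abs_of_nonneg hρ0'.le, ← hqnorm]
  have hball : HasFPowerSeriesOnBall G q u₀ ρ := by
    refine ⟨hqrad, hρρ, ?_⟩
    intro y hy
    rw [EMetric.mem_ball, edist_zero_right] at hy
    have hy' : |y| < (ρ:ℝ) := by
      have := hy.trans_le le_rfl
      exact_mod_cast this
    have hsum2 := hGsum y hy'.le
    have h1 : (fun k => q k fun _ => y) = fun k => b k * y^k := by
      funext k
      rw [hqdef, FormalMultilinearSeries.ofScalars_apply_eq, smul_eq_mul]
    rw [h1]
    have h2 : G (u₀ + y) = ∑' k, b k * y^k := by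
      rw [hGdef]
      simp only [add_sub_cancel_left]
    rw [h2]
    exact hsum2.hasSum
  have hGan : AnalyticAt ℝ G u₀ := ⟨q, ⟨ρ, hball⟩⟩
  refine ⟨G, hGan, ?_⟩
  -- derivative of G
  set f' : ℕ → ℝ → ℝ := fun k z => b k * ((k:ℝ) * (z - u₀)^(k-1)) with hf'def
  have hder : ∀ y ∈ Metric.ball u₀ (ρ:ℝ), HasDerivAt G (∑' k, f' k y) y := by
    intro y hy
    refine hasDerivAt_tsum_of_isPreconnected husum Metric.isOpen_ball
      (convex_ball u₀ (ρ:ℝ)).isPreconnected ?_ ?_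
      (Metric.mem_ball_self hρ0') ?_ hy
    · intro k z _
      have h1 : HasDerivAt (fun z : ℝ => (z - u₀)^k) ((k:ℝ) * (z - u₀)^(k-1)) z := by
        simpa [Pi.pow_def] using ((hasDerivAt_id z).sub_const u₀).pow k
      simpa [hf'def] using h1.const_mul (b k)
    · intro k z hz
      rw [Metric.mem_ball, Real.dist_eq] at hz
      match k with
      | 0 => simp [hf'def, hudef]
      | (j+1) =>
        have h1 : ‖f' (j+1) z‖ = |b (j+1)| * (((j:ℝ)+1) * |z - u₀|^j) := by
          simp only [hf'def, Nat.add_sub_cancel, Real.norm_eq_abs, abs_mul, abs_pow]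
          push_cast
          rw [abs_of_nonneg (by positivity : (0:ℝ) ≤ (j:ℝ)+1)]
        rw [h1, hudef]
        have h2 : |b (j+1)| * ((j:ℝ)+1) ≤ ‖p j‖ := by
          rw [hbs, abs_div, abs_of_nonneg (by positivity : (0:ℝ) ≤ (j:ℝ)+1), ← hcoeff j]
          rw [div_mul_cancel₀ _ (by positivity : ((j:ℝ)+1) ≠ 0)]
        have h3 : |z - u₀|^j ≤ (ρ:ℝ)^j := pow_le_pow_left₀ (abs_nonneg _) hz.le _
        calc |b (j+1)| * (((j:ℝ)+1) * |z - u₀|^j)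
            = (|b (j+1)| * ((j:ℝ)+1)) * |z - u₀|^j := by ring
          _ ≤ ‖p j‖ * (ρ:ℝ)^j := mul_le_mul h2 h3 (by positivity) (norm_nonneg _)
    · apply summable_zero.congr
      intro k
      match k with
      | 0 => simp [hb0]
      | (j+1) => simp
  filter_upwards [Metric.ball_mem_nhds u₀ hρ0'] with y hy
  have h1 := hder y hy
  have h2 : ∑' k, f' k y = g y := by
    rw [Metric.mem_ball, Real.dist_eq] at hy
    have hmem : y - u₀ ∈ Metric.eball (0:ℝ) ρ := by
      rw [EMetric.mem_ball, edist_zero_right]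
      exact_mod_cast hy
    have hS := hball.hasSum (y := y - u₀) hmem
    -- this is the sum of q, but we want the sum of p; redo with hp
    have hmem2 : y - u₀ ∈ Metric.eball (0:ℝ) r := by
      rw [EMetric.mem_ball, edist_zero_right]
      calc (‖y - u₀‖₊ : ENNReal) < ρ := by exact_mod_cast hy
        _ < r := hρr
    have hSg := hp.hasSum hmem2
    have h3 : (fun k => p k fun _ => y - u₀) = fun k => p.coeff k * (y - u₀)^k := by
      funext k
      rw [p.apply_eq_pow_smul_coeff, smul_eq_mul, mul_comm]
    rw [h3, add_sub_cancel] at hSg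
    have h4 : (fun k => f' (k+1) y) = fun k => p.coeff k * (y - u₀)^k := by
      funext j
      simp only [hf'def, Nat.add_sub_cancel]
      rw [hbs]
      push_cast
      field_simp
    have h5 : HasSum (fun k => f' (k+1) y) (g y) := by rw [h4]; exact hSg
    have h6 := (hasSum_nat_add_iff (f := fun k => f' k y) 1).1 h5
    simp only [Finset.range_one, Finset.sum_singleton] at h6
    have h7 : f' 0 y = 0 := by simp [hf'def]
    rw [h7, add_zero] at h6
    exact h6.tsum_eq
  rw [h2] at h1
  exact h1

private lemma AC_analytic (n : ℕ) (hn : 1 ≤ n) (m : ℝ → ℝ)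
    (hd1 : Differentiable ℝ m)
    (hqnn : ∀ x, 0 ≤ deriv m x)
    (hid : ∀ x, ((n:ℝ)+1) * (deriv m x)^2 = (m x)^(2*n+2) - ((n:ℝ)+1)*(m x)^2 + (n:ℝ))
    (hlt : ∀ x, m x < 1) (hgt : ∀ x, -1 < m x) (x₀ : ℝ) :
    ContDiffAt ℝ (⊤ : ℕ∞) m x₀ := by
  have hP : ∀ u : ℝ, -1 < u → u < 1 → 0 < u^(2*n+2) - ((n:ℝ)+1)*u^2 + (n:ℝ) := by
    intro u h1 h2
    have h3 := AC_low n hn u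
    have h4 : 0 < 1 - u^2 := by nlinarith
    nlinarith [pow_pos h4 2]
  obtain ⟨u₀, hu₀⟩ : ∃ u₀ : ℝ, u₀ = m x₀ := ⟨_, rfl⟩
  obtain ⟨Pf, hPfdef⟩ : ∃ Pf : ℝ → ℝ, Pf = fun u => u^(2*n+2) - ((n:ℝ)+1)*u^2 + (n:ℝ) :=
    ⟨_, rfl⟩
  have hPfval : ∀ u, Pf u = u^(2*n+2) - ((n:ℝ)+1)*u^2 + (n:ℝ) := fun u => by rw [hPfdef]
  have hPan : AnalyticAt ℝ Pf u₀ := by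
    rw [hPfdef]
    exact (((analyticAt_id).pow (2*n+2)).sub (analyticAt_const.mul ((analyticAt_id).pow 2))).add
      analyticAt_const
  have hPpos : 0 < Pf u₀ := by rw [hPfval, hu₀]; exact hP _ (hgt x₀) (hlt x₀)
  have hPposm : ∀ x, 0 < Pf (m x) := fun x => by rw [hPfval]; exact hP _ (hgt x) (hlt x)
  obtain ⟨h, hhdef⟩ : ∃ h : ℝ → ℝ, h = fun u => Real.sqrt (((n:ℝ)+1) / Pf u) := ⟨_, rfl⟩
  have hhval : ∀ u, h u = Real.sqrt (((n:ℝ)+1) / Pf u) := fun u => by rw [hhdef]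
  have hhan : AnalyticAt ℝ h u₀ := by
    rw [hhdef]
    have hdiv : AnalyticAt ℝ (fun u => ((n:ℝ)+1) / Pf u) u₀ :=
      analyticAt_const.div hPan hPpos.ne'
    have h2 : AnalyticAt ℝ (Real.sqrt ∘ (fun u => ((n:ℝ)+1) / Pf u)) u₀ :=
      AnalyticAt.comp (AC_analyticAt_sqrt (by positivity)) hdiv
    exact h2
  obtain ⟨G, hGan, hGd⟩ := AC_antideriv hhan
  have hqeq : ∀ x, deriv m x = Real.sqrt (Pf (m x) / ((n:ℝ)+1)) := by
    intro x
    have h1 := hid x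
    have h2 : Pf (m x) / ((n:ℝ)+1) = (deriv m x)^2 := by
      rw [hPfval]
      have : ((n:ℝ)+1) ≠ 0 := by positivity
      field_simp
      linarith
    rw [h2]
    exact (Real.sqrt_sq (hqnn x)).symm
  have hprod : ∀ x, h (m x) * deriv m x = 1 := by
    intro x
    have hne1 : Pf (m x) ≠ 0 := (hPposm x).ne'
    have hne2 : ((n:ℝ)+1) ≠ 0 := by positivity
    rw [hqeq x, hhval]
    rw [← Real.sqrt_mul (div_nonneg (by positivity) (hPposm x).le)]
    rw [show ((n:ℝ)+1)/Pf (m x) * (Pf (m x)/((n:ℝ)+1)) = 1 by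
      rw [div_mul_div_comm, mul_comm (Pf (m x)) (((n:ℝ)+1))]
      exact div_self (mul_ne_zero hne2 hne1)]
    exact Real.sqrt_one
  have hmx : Tendsto m (𝓝 x₀) (𝓝 u₀) := by rw [hu₀]; exact hd1.continuous.continuousAt
  have hev : ∀ᶠ x in 𝓝 x₀, HasDerivAt G (h (m x)) (m x) := hmx.eventually hGd
  obtain ⟨δ, hδ0, hδ⟩ := Metric.eventually_nhds_iff_ball.1 hev
  have hF : ∀ y ∈ Metric.ball x₀ δ, HasDerivAt (fun x => G (m x) - x) 0 y := by
    intro y hy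
    have h1 : HasDerivAt (fun x => G (m x)) (h (m y) * deriv m y) y :=
      (hδ y hy).comp y (hd1 y).hasDerivAt
    have h2 := h1.sub (hasDerivAt_id y)
    rw [hprod y] at h2
    simpa [Pi.sub_def] using h2
  have hconst : ∀ y ∈ Metric.ball x₀ δ, G (m y) - y = G u₀ - x₀ := by
    have hsub : ∀ z a b : ℝ, a ∈ Metric.ball x₀ δ → b ∈ Metric.ball x₀ δ → a ≤ z → z ≤ b →
        z ∈ Metric.ball x₀ δ := by
      intro z a b ha hb haz hzb
      rw [Real.ball_eq_Ioo] at *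
      exact ⟨lt_of_lt_of_le ha.1 haz, lt_of_le_of_lt hzb hb.2⟩
    intro y hy
    have hx₀mem : x₀ ∈ Metric.ball x₀ δ := Metric.mem_ball_self hδ0
    rcases le_or_gt x₀ y with hxy | hxy
    · rcases eq_or_lt_of_le hxy with heq | hlt'
      · rw [← heq, hu₀]
      · have hmem : ∀ z ∈ Set.Icc x₀ y, z ∈ Metric.ball x₀ δ :=
          fun z hz => hsub z x₀ y hx₀mem hy hz.1 hz.2
        have := constant_of_has_deriv_right_zero
          (f := fun x => G (m x) - x) (a := x₀) (b := y)
          (fun z hz => ((hF z (hmem z hz)).continuousAt).continuousWithinAt)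
          (fun z hz => ((hF z (hmem z (Set.mem_Icc.2 ⟨hz.1, hz.2.le⟩))).hasDerivWithinAt))
          y (Set.mem_Icc.2 ⟨hxy, le_rfl⟩)
        rw [hu₀]
        linarith [this]
    · have hmem : ∀ z ∈ Set.Icc y x₀, z ∈ Metric.ball x₀ δ :=
        fun z hz => hsub z y x₀ hy hx₀mem hz.1 hz.2
      have := constant_of_has_deriv_right_zero
        (f := fun x => G (m x) - x) (a := y) (b := x₀)
        (fun z hz => ((hF z (hmem z hz)).continuousAt).continuousWithinAt)
        (fun z hz => ((hF z (hmem z (Set.mem_Icc.2 ⟨hz.1, hz.2.le⟩))).hasDerivWithinAt))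
        x₀ (Set.mem_Icc.2 ⟨hxy.le, le_rfl⟩)
      rw [hu₀]
      linarith [this]
  obtain ⟨φ, hφdef⟩ : ∃ φ : ℝ → ℝ, φ = fun u => G u - (G u₀ - x₀) := ⟨_, rfl⟩
  have hφan : AnalyticAt ℝ φ u₀ := by rw [hφdef]; exact hGan.sub analyticAt_const
  have hφc : ContDiffAt ℝ (⊤ : ℕ∞) φ u₀ := hφan.contDiffAt
  have hφd : HasDerivAt φ (h u₀) u₀ := by
    rw [hφdef]
    exact (hGd.self_of_nhds).sub_const _
  have hc0 : 0 < h u₀ := by rw [hhval]; exact Real.sqrt_pos.2 (by positivity)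
  obtain ⟨i, hidef⟩ : ∃ i : ℝ ≃L[ℝ] ℝ,
      i = ContinuousLinearEquiv.unitsEquivAut ℝ (Units.mk0 (h u₀) hc0.ne') := ⟨_, rfl⟩
  have hieq : (i : ℝ →L[ℝ] ℝ) = ContinuousLinearMap.smulRight (1 : ℝ →L[ℝ] ℝ) (h u₀) := by
    rw [hidef]
    ext1
    simp [ContinuousLinearEquiv.unitsEquivAut]
  have hφf : HasFDerivAt φ (i : ℝ →L[ℝ] ℝ) u₀ := by
    rw [hieq]
    exact hφd.hasFDerivAt
  have hψ := hφc.to_localInverse (f' := i) hφf (by simp)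
  have hφu₀ : φ u₀ = x₀ := by rw [hφdef]; simp
  rw [hφu₀] at hψ
  have hstrict : HasStrictFDerivAt φ (i : ℝ →L[ℝ] ℝ) u₀ := hφc.hasStrictFDerivAt' hφf (by simp)
  have hleft := hstrict.eventually_left_inverse
  have hev2 : ∀ᶠ x in 𝓝 x₀, hstrict.localInverse φ i u₀ (φ (m x)) = m x := hmx.eventually hleft
  have hev3 : ∀ᶠ x in 𝓝 x₀, φ (m x) = x := by
    filter_upwards [Metric.ball_mem_nhds x₀ hδ0] with y hy
    have := hconst y hy
    rw [hφdef]
    simp only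
    linarith
  have hfinal : m =ᶠ[𝓝 x₀] hφc.localInverse hφf (by simp) := by
    filter_upwards [hev2, hev3] with y h1 h2
    rw [← h1, h2]
    rfl
  exact hψ.congr_of_eventuallyEq hfinal

/-- The standing-wave profile `m` of the Allen–Cahn equation is smooth and its
derivative decays exponentially. -/
theorem stmt_0 (n : ℕ) (hn : 1 ≤ n) (m : ℝ → ℝ)
    (hm : ContDiff ℝ 2 m) (hmono : Monotone m)
    (heq : ∀ x : ℝ, deriv (deriv m) x + m x - m x ^ (2 * n + 1) = 0)
    (h0 : m 0 = 0)
    (htop : Tendsto m atTop (nhds 1))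
    (hbot : Tendsto m atBot (nhds (-1))) :
    ContDiff ℝ (⊤ : ℕ∞) m ∧
      ∃ c > (0:ℝ), ∃ C > (0:ℝ), ∀ x : ℝ, |deriv m x| ≤ C * Real.exp (-c * |x|) := by
  obtain ⟨hstrict₁, hdecay₁⟩ := AC_oneSided n hn m hm hmono heq h0 htop hbot
  obtain ⟨hmr, hmonor, heqr, h0r, htopr, hbotr, hdr⟩ :=
    AC_reflect n m hm hmono heq h0 htop hbot
  obtain ⟨hstrict₂, hdecay₂⟩ := AC_oneSided n hn _ hmr hmonor heqr h0r htopr hbotr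
  have hstrictlb : ∀ x, -1 < m x := by
    intro x
    have := hstrict₂ (-x)
    simp only [neg_neg] at this
    linarith
  constructor
  · have hd1 : Differentiable ℝ m := hm.differentiable (by norm_num)
    have hqnn : ∀ x, 0 ≤ deriv m x := AC_deriv_nonneg hmono hd1
    have hid := AC_keyId n m hm hmono heq htop hbot
    exact contDiff_iff_contDiffAt.2 fun x₀ =>
      AC_analytic n hn m hd1 hqnn hid hstrict₁ hstrictlb x₀
  · refine ⟨(Real.sqrt ((n:ℝ)+1))⁻¹, by positivity, Real.sqrt (2*(n:ℝ)),
      Real.sqrt_pos.2 (by positivity), ?_⟩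
    intro x
    rcases le_or_gt 0 x with hx | hx
    · rw [abs_of_nonneg hx]
      exact hdecay₁ x hx
    · have h1 := hdecay₂ (-x) (by linarith)
      rw [hdr (-x)] at h1
      simp only [neg_neg] at h1
      rw [abs_of_neg hx]
      exact h1
end

section
/- Let μ > 0, δ ∈ (0,1/2], and C^{(δ)} = ∫_ℝ |η|·e^{−8π²δ²η²} / (2(4π²η² + μ)) dη. Set α = −(γ_EM + log 2)/(8π²), where γ_EM is the Euler–Mascheroni constant. Then there exists a universal constant C > 0 such that for all μ > 0 and δ ∈ (0,1/2] with μδ² ≤ 1, one has |C^{(δ)} − log(1/δ)/(4π²) − α + (log μ)/(8π²)| ≤ C·μδ²·(1 + log(1/(μδ²))). -/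
/-!
The substitutions `u = η²` and `t = 8π²δ²u + 2μδ²` turn `C^{(δ)}` into `eˣ E₁(x) / (8π²)`, where
`x = 2μδ²` and `E₁(x) = ∫_x^∞ e^{-t}/t dt` is the exponential integral. Integrating by parts and
using `∫_0^∞ e^{-t} log t dt = Γ'(1) = -γ` gives
`E₁(x) + log x + γ = (1 - e^{-x}) log x - ∫_0^x e^{-t} log t dt`, which is `O(x (1 + log (2/x)))`
for `0 < x ≤ 2`; since `E₁(x) ≤ 1 + log (2/x)` there, so is `(eˣ - 1) E₁(x)`.
-/

open MeasureTheory

/-- The logarithmically divergent renormalization constant `C^{(δ)}`. -/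
noncomputable def Cdelta (μ δ : ℝ) : ℝ :=
  ∫ η : ℝ, |η| * Real.exp (-8 * Real.pi ^ 2 * δ ^ 2 * η ^ 2) /
    (2 * (4 * Real.pi ^ 2 * η ^ 2 + μ))

open Set Real Filter

noncomputable def expIntegralE1 (x : ℝ) : ℝ := ∫ t in Ioi x, exp (-t) / t

lemma integrableOn_exp_neg_div_Ioi {x : ℝ} (hx : 0 < x) :
    IntegrableOn (fun t => exp (-t) / t) (Ioi x) := by
  refine ((exp_neg_integrableOn_Ioi x one_pos).div_const x).mono'
    (by fun_prop : Measurable _).aestronglyMeasurable ?_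
  filter_upwards [ae_restrict_mem measurableSet_Ioi] with t ht
  have ht0 : 0 < t := hx.trans ht
  rw [norm_div, norm_of_nonneg (exp_pos _).le, norm_of_nonneg ht0.le, neg_one_mul]
  exact div_le_div_of_nonneg_left (exp_pos _).le hx ht.le

lemma integrableOn_exp_neg_mul_log_Ioi :
    IntegrableOn (fun t => exp (-t) * log t) (Ioi 0) := by
  rw [← Ioc_union_Ioi_eq_Ioi zero_le_one]
  refine IntegrableOn.union ?_ ?_
  · have hlog : IntegrableOn log (Ioc 0 1) :=
      (intervalIntegrable_iff_integrableOn_Ioc_of_le zero_le_one).1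
        intervalIntegral.intervalIntegrable_log'
    refine hlog.norm.mono' (by fun_prop) ?_
    filter_upwards [ae_restrict_mem measurableSet_Ioc] with t ht
    rw [norm_mul, norm_of_nonneg (exp_pos _).le]
    exact mul_le_of_le_one_left (norm_nonneg _) (exp_le_one_iff.2 (by linarith [ht.1]))
  · have h : IntegrableOn (fun t => exp (-t) * t) (Ioi 1) := by
      refine ((GammaIntegral_convergent two_pos).mono_set (Ioi_subset_Ioi zero_le_one)).congr_fun
        (fun t _ => ?_) measurableSet_Ioi
      norm_num
    refine h.mono' (by fun_prop) ?_
    filter_upwards [ae_restrict_mem measurableSet_Ioi] with t (ht : 1 < t)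
    rw [norm_mul, norm_of_nonneg (exp_pos _).le, norm_of_nonneg (log_nonneg ht.le)]
    exact mul_le_mul_of_nonneg_left (log_le_self (by linarith)) (exp_pos _).le

lemma integral_exp_neg_mul_log_Ioi :
    ∫ t in Ioi 0, exp (-t) * log t = -eulerMascheroniConstant := by
  have hΓ : HasDerivAt Complex.Gamma ((∫ t in Ioi 0, exp (-t) * log t : ℝ) : ℂ) 1 := by
    refine (Complex.hasDerivAt_GammaIntegral (s := 1) (by norm_num)).congr_of_eventuallyEq ?_
      |>.congr_deriv ?_
    · filter_upwards [(isOpen_lt continuous_const Complex.continuous_re).mem_nhds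
        (by norm_num : (0:ℝ) < (1:ℂ).re)] with s hs
      exact Complex.Gamma_eq_integral hs
    · rw [← integral_complex_ofReal]
      refine setIntegral_congr_fun measurableSet_Ioi fun t _ => ?_
      simp [mul_comm]
  simpa using hΓ.real_of_complex.unique hasDerivAt_Gamma_one

lemma tendsto_exp_neg_mul_log_atTop :
    Tendsto (fun t => exp (-t) * log t) atTop (nhds 0) := by
  refine squeeze_zero_norm' ?_ (by simpa using tendsto_pow_mul_exp_neg_atTop_nhds_zero 1)
  filter_upwards [eventually_ge_atTop 1] with t ht
  rw [norm_mul, norm_of_nonneg (exp_pos _).le, norm_of_nonneg (log_nonneg ht), mul_comm t]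
  exact mul_le_mul_of_nonneg_left (log_le_self (by linarith)) (exp_pos _).le

lemma expIntegralE1_eq_integral_exp_neg_mul_log {x : ℝ} (hx : 0 < x) :
    expIntegralE1 x = -(exp (-x) * log x) + ∫ t in Ioi x, exp (-t) * log t := by
  have hderiv : ∀ t ∈ Ici x, HasDerivAt (fun t => exp (-t) * log t)
      (exp (-t) / t - exp (-t) * log t) t := fun t ht => by
    refine (((hasDerivAt_neg t).exp).fun_mul (hasDerivAt_log (hx.trans_le ht).ne')).congr_deriv ?_
    ring
  have hlog := integrableOn_exp_neg_mul_log_Ioi.mono_set (Ioi_subset_Ioi hx.le)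
  have hftc := integral_Ioi_of_hasDerivAt_of_tendsto' hderiv
    ((integrableOn_exp_neg_div_Ioi hx).sub hlog) tendsto_exp_neg_mul_log_atTop
  rw [integral_sub (integrableOn_exp_neg_div_Ioi hx) hlog] at hftc
  rw [expIntegralE1]
  linarith

lemma expIntegralE1_add_log_add_eulerMascheroniConstant {x : ℝ} (hx : 0 < x) :
    expIntegralE1 x + log x + eulerMascheroniConstant
      = (1 - exp (-x)) * log x - ∫ t in (0)..x, exp (-t) * log t := by
  rw [← intervalIntegral.integral_Ioi_sub_Ioi integrableOn_exp_neg_mul_log_Ioi hx.le,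
    integral_exp_neg_mul_log_Ioi, expIntegralE1_eq_integral_exp_neg_mul_log hx]
  ring

lemma abs_log_le_two_mul_log_two_sub_log {t : ℝ} (ht : 0 < t) (ht2 : t ≤ 2) :
    |log t| ≤ 2 * log 2 - log t := by
  have hlog : log t ≤ log 2 := log_le_log ht ht2
  have hlog2 : 0 ≤ log 2 := log_nonneg one_le_two
  exact abs_le'.2 ⟨by linarith, by linarith⟩

lemma abs_integral_exp_neg_mul_log_le {x : ℝ} (hx : 0 < x) (hx2 : x ≤ 2) :
    |∫ t in (0)..x, exp (-t) * log t| ≤ x * (1 + log 2 + log (2 / x)) := by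
  have hlog := intervalIntegral.intervalIntegrable_log' (a := 0) (b := x)
  calc |∫ t in (0)..x, exp (-t) * log t| ≤ ∫ t in (0)..x, (2 * log 2 - log t) := by
        rw [← norm_eq_abs]
        refine intervalIntegral.norm_integral_le_of_norm_le hx.le (ae_of_all _ fun t ht => ?_)
          ((intervalIntegrable_const (c := 2 * log 2)).sub hlog)
        rw [norm_mul, norm_of_nonneg (exp_pos _).le, norm_eq_abs]
        calc exp (-t) * |log t| ≤ |log t| :=
              mul_le_of_le_one_left (abs_nonneg _) (exp_le_one_iff.2 (by linarith [ht.1]))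
        _ ≤ 2 * log 2 - log t := abs_log_le_two_mul_log_two_sub_log ht.1 (ht.2.trans hx2)
  _ = x * (1 + log 2 + log (2 / x)) := by
        rw [intervalIntegral.integral_sub intervalIntegrable_const hlog, integral_log,
          intervalIntegral.integral_const, log_div two_ne_zero hx.ne']
        simp only [sub_zero, smul_eq_mul, log_zero, mul_zero, add_zero]
        ring

lemma abs_expIntegralE1_add_log_add_eulerMascheroniConstant_le {x : ℝ} (hx : 0 < x)
    (hx2 : x ≤ 2) :
    |expIntegralE1 x + log x + eulerMascheroniConstant| ≤ 3 * x * (1 + log (2 / x)) := by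
  have hlogx := abs_log_le_two_mul_log_two_sub_log hx hx2
  have hexp_le : 1 - exp (-x) ≤ x := by linarith [add_one_le_exp (-x)]
  have hexp_nonneg : 0 ≤ 1 - exp (-x) := by linarith [exp_le_one_iff.2 (neg_nonpos.2 hx.le)]
  have hlog2 : log 2 < 1 := by linarith [log_two_lt_d9]
  have hℓ : 0 ≤ log 2 - log x := by linarith [log_le_log hx hx2]
  rw [expIntegralE1_add_log_add_eulerMascheroniConstant hx]
  calc _ ≤ |(1 - exp (-x)) * log x| + |∫ t in (0)..x, exp (-t) * log t| := abs_sub _ _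
  _ ≤ x * (2 * log 2 - log x) + x * (1 + log 2 + log (2 / x)) := by
        gcongr
        · rw [abs_mul, abs_of_nonneg hexp_nonneg]
          exact mul_le_mul hexp_le hlogx (abs_nonneg _) hx.le
        · exact abs_integral_exp_neg_mul_log_le hx hx2
  _ ≤ 3 * x * (1 + log (2 / x)) := by
        rw [log_div two_ne_zero hx.ne']
        nlinarith

lemma expIntegralE1_nonneg {x : ℝ} (hx : 0 < x) : 0 ≤ expIntegralE1 x :=
  setIntegral_nonneg measurableSet_Ioi fun _ ht => div_nonneg (exp_pos _).le (hx.trans ht).le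

lemma expIntegralE1_le {x : ℝ} (hx : 0 < x) (hx2 : x ≤ 2) :
    expIntegralE1 x ≤ 1 + log (2 / x) := by
  have hint := integrableOn_exp_neg_div_Ioi hx
  have hsplit := intervalIntegral.integral_Ioi_sub_Ioi hint hx2
  have hnear : ∫ t in x..2, exp (-t) / t ≤ log (2 / x) := by
    rw [← integral_inv_of_pos hx two_pos]
    refine intervalIntegral.integral_mono_on hx2 ?_ ?_ fun t ht => ?_
    · exact (intervalIntegrable_iff_integrableOn_Ioc_of_le hx2).2
        (hint.mono_set Ioc_subset_Ioi_self)
    · refine intervalIntegral.intervalIntegrable_inv (fun t ht => ?_) continuousOn_id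
      rw [uIcc_of_le hx2] at ht
      exact (hx.trans_le ht.1).ne'
    · rw [div_eq_mul_inv]
      exact mul_le_of_le_one_left (inv_nonneg.2 (hx.trans_le ht.1).le)
        (exp_le_one_iff.2 (by linarith [ht.1]))
  have hfar : ∫ t in Ioi 2, exp (-t) / t ≤ 1 := by
    calc ∫ t in Ioi 2, exp (-t) / t ≤ ∫ t in Ioi 2, exp (-t) := by
          refine setIntegral_mono_on (integrableOn_exp_neg_div_Ioi two_pos) ?_ measurableSet_Ioi
            fun t (ht : 2 < t) => div_le_self (exp_pos _).le (by linarith)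
          simpa using exp_neg_integrableOn_Ioi 2 one_pos
    _ = exp (-2) := integral_exp_neg_Ioi 2
    _ ≤ 1 := exp_le_one_iff.2 (by norm_num)
  rw [expIntegralE1]
  linarith

lemma exp_sub_one_le_mul_exp (x : ℝ) : exp x - 1 ≤ x * exp x := by
  have h : exp (-x) * exp x = 1 := by rw [← exp_add, neg_add_cancel, exp_zero]
  nlinarith [add_one_le_exp (-x), exp_pos x]

lemma abs_exp_mul_expIntegralE1_add_log_add_eulerMascheroniConstant_le {x : ℝ} (hx : 0 < x)
    (hx2 : x ≤ 2) :
    |exp x * expIntegralE1 x + log x + eulerMascheroniConstant|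
      ≤ 11 * x * (1 + log (2 / x)) := by
  have hexp : exp x - 1 ≤ 8 * x := by
    have h2 : exp 2 < 8 := by
      rw [show (2:ℝ) = 1 + 1 by norm_num, exp_add]
      nlinarith [exp_one_lt_d9, exp_pos 1]
    nlinarith [exp_sub_one_le_mul_exp x, exp_le_exp.2 hx2]
  have hE := expIntegralE1_nonneg hx
  have hexp_nonneg : 0 ≤ exp x - 1 := by linarith [add_one_le_exp x]
  calc _ = |(expIntegralE1 x + log x + eulerMascheroniConstant)
        + (exp x - 1) * expIntegralE1 x| := by ring_nf
  _ ≤ 3 * x * (1 + log (2 / x)) + 8 * x * (1 + log (2 / x)) := by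
        refine (abs_add_le _ _).trans (add_le_add
          (abs_expIntegralE1_add_log_add_eulerMascheroniConstant_le hx hx2) ?_)
        rw [abs_of_nonneg (mul_nonneg hexp_nonneg hE)]
        exact mul_le_mul hexp (expIntegralE1_le hx hx2) hE (by positivity)
  _ = 11 * x * (1 + log (2 / x)) := by ring

lemma setIntegral_Ioi_comp_add_right {E : Type*} [NormedAddCommGroup E] [NormedSpace ℝ E]
    (g : ℝ → E) (a c : ℝ) : ∫ x in Ioi a, g (x + c) = ∫ x in Ioi (a + c), g x := by
  simpa [preimage_add_const_Ioi] using
    (measurePreserving_add_right volume c).setIntegral_preimage_emb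
      (measurableEmbedding_addRight c) g (Ioi (a + c))

lemma integral_exp_neg_mul_div_add_Ioi {a : ℝ} (ha : 0 < a) (c : ℝ) :
    ∫ u in Ioi 0, exp (-(a * u)) / (u + c) = exp (a * c) * expIntegralE1 (a * c) := by
  have hshift : ∀ u, exp (-(a * u)) / (u + c) = exp (a * c) * (exp (-(a * (u + c))) / (u + c)) :=
    fun u => by rw [← mul_div_assoc, ← exp_add]; ring_nf
  have hscale : ∀ v, exp (-(a * v)) / v = a * (exp (-(a * v)) / (a * v)) :=
    fun v => by rw [← mul_div_assoc, mul_div_mul_left _ _ ha.ne']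
  simp_rw [hshift, integral_const_mul]
  rw [setIntegral_Ioi_comp_add_right (fun v => exp (-(a * v)) / v), zero_add]
  simp_rw [hscale, integral_const_mul]
  rw [expIntegralE1, ← integral_comp_mul_left_Ioi' (fun t => exp (-t) / t) c ha, smul_eq_mul]

lemma integral_abs_mul_exp_neg_mul_sq_div {a b : ℝ} (ha : 0 < a) (hb : 0 < b) (c : ℝ) :
    ∫ η : ℝ, |η| * exp (-(a * η ^ 2)) / (b * η ^ 2 + c)
      = exp (a * c / b) * expIntegralE1 (a * c / b) / b := by
  have hsq : ∫ r in Ioi 0, r * exp (-(a * r ^ 2)) / (b * r ^ 2 + c)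
      = 2⁻¹ * ∫ u in Ioi 0, exp (-(a * u)) / (b * u + c) := by
    rw [← integral_comp_rpow_Ioi_of_pos (g := fun u => exp (-(a * u)) / (b * u + c)) two_pos,
      ← integral_const_mul]
    refine setIntegral_congr_fun measurableSet_Ioi fun r _ => ?_
    norm_num [rpow_two]
    ring
  have hlin : ∀ u, exp (-(a * u)) / (b * u + c) = b⁻¹ * (exp (-(a * u)) / (u + c / b)) :=
    fun u => by field_simp
  have habs := integral_comp_abs (f := fun r => r * exp (-(a * r ^ 2)) / (b * r ^ 2 + c))
  simp only [sq_abs] at habs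
  simp_rw [habs, hsq, hlin, integral_const_mul, integral_exp_neg_mul_div_add_Ioi ha, mul_div_assoc]
  ring

lemma Cdelta_eq_exp_mul_expIntegralE1 {μ δ : ℝ} (hδ : δ ≠ 0) :
    Cdelta μ δ = exp (2 * μ * δ ^ 2) * expIntegralE1 (2 * μ * δ ^ 2) / (8 * π ^ 2) := by
  have h := integral_abs_mul_exp_neg_mul_sq_div (a := 8 * π ^ 2 * δ ^ 2) (b := 4 * π ^ 2)
    (by positivity) (by positivity) μ
  have hx : 8 * π ^ 2 * δ ^ 2 * μ / (4 * π ^ 2) = 2 * μ * δ ^ 2 := by field_simp; ring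
  rw [hx] at h
  have hintegrand : ∀ η : ℝ, |η| * exp (-8 * π ^ 2 * δ ^ 2 * η ^ 2) / (2 * (4 * π ^ 2 * η ^ 2 + μ))
      = |η| * exp (-(8 * π ^ 2 * δ ^ 2 * η ^ 2)) / (4 * π ^ 2 * η ^ 2 + μ) / 2 :=
    fun η => by rw [neg_mul, neg_mul, neg_mul, div_div, mul_comm 2]
  rw [Cdelta, funext hintegrand, integral_div, h]
  ring

/-- Logarithmic divergence of `C^{(δ)}` as `δ → 0`:
`C^{(δ)} = log(1/δ)/(4π²) + α − log μ/(8π²) + O(μδ²(1+log(1/(μδ²))))`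
with `α = −(γ_EM + log 2)/(8π²)`. -/
theorem stmt_6 :
    ∃ C > (0:ℝ), ∀ μ : ℝ, 0 < μ → ∀ δ : ℝ, δ ∈ Set.Ioc (0:ℝ) (1/2) → μ * δ ^ 2 ≤ 1 →
      |Cdelta μ δ - Real.log (1 / δ) / (4 * Real.pi ^ 2)
          - (-(Real.eulerMascheroniConstant + Real.log 2) / (8 * Real.pi ^ 2))
          + Real.log μ / (8 * Real.pi ^ 2)|
        ≤ C * (μ * δ ^ 2) * (1 + Real.log (1 / (μ * δ ^ 2))) := by
  refine ⟨11 / (4 * π ^ 2), by positivity, fun μ hμ δ ⟨hδ, _⟩ hμδ => ?_⟩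
  have hx : 0 < 2 * μ * δ ^ 2 := by positivity
  have hlog : log (2 * μ * δ ^ 2) = log 2 + log μ - 2 * log (1 / δ) := by
    rw [log_mul (by positivity) (by positivity), log_mul two_ne_zero hμ.ne', log_pow, one_div,
      log_inv]
    push_cast
    ring
  have hcentered : Cdelta μ δ - log (1 / δ) / (4 * π ^ 2)
      - (-(eulerMascheroniConstant + log 2) / (8 * π ^ 2)) + log μ / (8 * π ^ 2)
      = (exp (2 * μ * δ ^ 2) * expIntegralE1 (2 * μ * δ ^ 2) + log (2 * μ * δ ^ 2)
          + eulerMascheroniConstant) / (8 * π ^ 2) := by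
    rw [Cdelta_eq_exp_mul_expIntegralE1 hδ.ne', hlog]
    field_simp
    ring
  have hratio : 2 / (2 * μ * δ ^ 2) = 1 / (μ * δ ^ 2) := by field_simp
  rw [hcentered, abs_div, abs_of_pos (by positivity : (0:ℝ) < 8 * π ^ 2),
    div_le_iff₀ (by positivity)]
  calc _ ≤ 11 * (2 * μ * δ ^ 2) * (1 + log (2 / (2 * μ * δ ^ 2))) :=
        abs_exp_mul_expIntegralE1_add_log_add_eulerMascheroniConstant_le hx (by linarith)
  _ = _ := by
        rw [hratio]
        field_simp
        ring
end

section
/- Let φ : ℝ → ℝ be a Schwartz function and let C_𝔣 > 0 satisfy 1/C_𝔣 = ∫_ℝ (1 − cos(2πz))/|z|^{3/2} dz. Then there exists a constant C > 0 (depending on φ) such that for all x ∈ ℝ, |C_𝔣·∫_ℝ (φ(x) − φ(x−z))/|z|^{3/2} dz| ≤ C·(1+x²)^{−3/4}. -/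
/-!
Split the singular integral at `|z| = R`. Near the origin the mean value theorem gives
`|φ x - φ (x - z)| ≤ sup |φ'| · |z|`, which makes `|z|^{-1/2}` appear, integrable at `0`; far away,
`|φ x| |z|^{-3/2}` is integrable at infinity and `∫ |φ (x - z)| |z|^{-3/2}` is at most
`R^{-3/2} ‖φ‖₁`. With `R ≍ ⟨x⟩` the window `|y - x| ≤ R` stays where `1 + y² ≍ ⟨x⟩²`, so
`sup |φ'| ≲ ⟨x⟩⁻²`, and the three pieces are `O(⟨x⟩⁻²R^{1/2})`, `O(⟨x⟩⁻²R^{-1/2})` and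
`O(R^{-3/2})`, all `O(⟨x⟩^{-3/2})`.
-/

open MeasureTheory Set

theorem setIntegral_Icc_abs_rpow {R a : ℝ} (hR : 0 ≤ R) (ha : -1 < a) :
    ∫ z in Icc (-R) R, |z| ^ a = 2 * R ^ (a + 1) / (a + 1) := by
  have hind : (Icc (-R) R).indicator (fun z : ℝ => |z| ^ a)
      = fun z => (Iic R).indicator (· ^ a) |z| := by
    ext z
    simp only [indicator, mem_Icc, mem_Iic, ← abs_le]
  rw [← integral_indicator measurableSet_Icc, hind, integral_comp_abs,
    integral_indicator measurableSet_Iic, Measure.restrict_restrict measurableSet_Iic,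
    inter_comm, Ioi_inter_Iic, ← intervalIntegral.integral_of_le hR, integral_rpow (.inl ha),
    Real.zero_rpow (by linarith), sub_zero, mul_div_assoc]

theorem setIntegral_compl_Icc_abs_rpow {R a : ℝ} (hR : 0 < R) (ha : a < -1) :
    ∫ z in (Icc (-R) R)ᶜ, |z| ^ a = -2 * R ^ (a + 1) / (a + 1) := by
  have hind : (Icc (-R) R)ᶜ.indicator (fun z : ℝ => |z| ^ a)
      = fun z => (Ioi R).indicator (· ^ a) |z| := by
    ext z
    simp only [indicator, mem_compl_iff, mem_Icc, mem_Ioi, ← abs_le, not_le]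
  rw [← integral_indicator measurableSet_Icc.compl, hind, integral_comp_abs,
    integral_indicator measurableSet_Ioi, Measure.restrict_restrict measurableSet_Ioi,
    Ioi_inter_Ioi, sup_eq_left.mpr hR.le, integral_Ioi_rpow_of_lt ha hR]
  ring

theorem integrableOn_Icc_abs_rpow {R a : ℝ} (hR : 0 < R) (ha : -1 < a) :
    IntegrableOn (fun z : ℝ => |z| ^ a) (Icc (-R) R) :=
  .of_integral_ne_zero <| by
    rw [setIntegral_Icc_abs_rpow hR.le ha]
    have : 0 < a + 1 := by linarith
    positivity

theorem integrableOn_compl_Icc_abs_rpow {R a : ℝ} (hR : 0 < R) (ha : a < -1) :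
    IntegrableOn (fun z : ℝ => |z| ^ a) (Icc (-R) R)ᶜ :=
  .of_integral_ne_zero <| by
    rw [setIntegral_compl_Icc_abs_rpow hR ha]
    exact div_ne_zero (by positivity) (by linarith)

theorem abs_div_abs_rpow_le_mul_rpow_one_sub {a A z s : ℝ} (hs : 1 < s) (ha : |a| ≤ A * |z|) :
    |a / |z| ^ s| ≤ A * |z| ^ (1 - s) := by
  rcases eq_or_ne z 0 with rfl | hz
  · simp [Real.zero_rpow (by linarith : s ≠ 0), Real.zero_rpow (by linarith : 1 - s ≠ 0)]
  have hz' : 0 < |z| := abs_pos.mpr hz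
  rw [abs_div, abs_of_pos (Real.rpow_pos_of_pos hz' s), Real.rpow_sub hz', Real.rpow_one,
    mul_div_assoc']
  exact div_le_div_of_nonneg_right ha (by positivity)

theorem abs_sub_div_abs_rpow_le {a b z R s : ℝ} (hR : 0 < R) (hRz : R ≤ |z|) (hs : 0 ≤ s) :
    |(a - b) / |z| ^ s| ≤ |a| * |z| ^ (-s) + R ^ (-s) * |b| := by
  have hz : 0 < |z| := hR.trans_le hRz
  rw [abs_div, abs_of_pos (Real.rpow_pos_of_pos hz s), Real.rpow_neg hz.le,
    Real.rpow_neg hR.le, ← div_eq_mul_inv, inv_mul_eq_div]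
  calc |a - b| / |z| ^ s ≤ (|a| + |b|) / |z| ^ s := by gcongr; exact abs_sub _ _
    _ = |a| / |z| ^ s + |b| / |z| ^ s := add_div _ _ _
    _ ≤ |a| / |z| ^ s + |b| / R ^ s := by gcongr

/-- For `s = 3 / 2` this is `√𝔇 f / C_𝔣`. -/
noncomputable def fracDiffIntegral (s : ℝ) (f : ℝ → ℝ) (x : ℝ) : ℝ :=
  ∫ z, (f x - f (x - z)) / |z| ^ s

theorem abs_fracDiffIntegral_le {f : ℝ → ℝ} (hf : Integrable f) {s R A x : ℝ}
    (hs₁ : 1 < s) (hs₂ : s < 2) (hR : 0 < R)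
    (hA : ∀ z ∈ Icc (-R) R, |f x - f (x - z)| ≤ A * |z|) :
    |fracDiffIntegral s f x|
      ≤ 2 * A * R ^ (2 - s) / (2 - s) + 2 * |f x| * R ^ (1 - s) / (s - 1)
        + R ^ (-s) * ∫ y, |f y| := by
  classical
  set near : ℝ → ℝ := fun z => A * |z| ^ (1 - s)
  set far : ℝ → ℝ := fun z => |f x| * |z| ^ (-s) + R ^ (-s) * |f (x - z)|
  have hnear : IntegrableOn near (Icc (-R) R) :=
    (integrableOn_Icc_abs_rpow hR (by linarith)).const_mul A
  have hshift : Integrable fun z => R ^ (-s) * |f (x - z)| :=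
    (hf.abs.comp_sub_left x).const_mul _
  have hfar : IntegrableOn far (Icc (-R) R)ᶜ :=
    ((integrableOn_compl_Icc_abs_rpow hR (by linarith)).const_mul _).add hshift.integrableOn
  have hle : ∀ z, |(f x - f (x - z)) / |z| ^ s| ≤ (Icc (-R) R).piecewise near far z := by
    intro z
    by_cases hmem : z ∈ Icc (-R) R
    · rw [piecewise_eq_of_mem _ _ _ hmem]
      exact abs_div_abs_rpow_le_mul_rpow_one_sub hs₁ (hA z hmem)
    · rw [piecewise_eq_of_notMem _ _ _ hmem]
      rw [mem_Icc, ← abs_le, not_le] at hmem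
      exact abs_sub_div_abs_rpow_le hR hmem.le (by linarith)
  calc |fracDiffIntegral s f x| ≤ ∫ z, (Icc (-R) R).piecewise near far z := by
        rw [← Real.norm_eq_abs]
        exact norm_integral_le_of_norm_le (.piecewise measurableSet_Icc hnear hfar)
          (.of_forall hle)
    _ = 2 * A * R ^ (2 - s) / (2 - s) + 2 * |f x| * R ^ (1 - s) / (s - 1)
        + ∫ z in (Icc (-R) R)ᶜ, R ^ (-s) * |f (x - z)| := by
        rw [integral_piecewise measurableSet_Icc hnear hfar, integral_const_mul,
          setIntegral_Icc_abs_rpow hR.le (by linarith), integral_add, integral_const_mul,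
          setIntegral_compl_Icc_abs_rpow hR (by linarith), show 1 - s + 1 = 2 - s by ring,
          show -s + 1 = 1 - s by ring]
        · have : 1 - s ≠ 0 := by linarith
          have : s - 1 ≠ 0 := by linarith
          field_simp
          ring
        exacts [(integrableOn_compl_Icc_abs_rpow hR (by linarith)).const_mul _,
          hshift.integrableOn]
    _ ≤ 2 * A * R ^ (2 - s) / (2 - s) + 2 * |f x| * R ^ (1 - s) / (s - 1)
        + ∫ z, R ^ (-s) * |f (x - z)| := by
        grw [setIntegral_le_integral hshift (.of_forall fun z => by positivity)]
    _ = _ := by rw [integral_const_mul, integral_sub_left_eq_self (fun y => |f y|)]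

namespace SchwartzMap

theorem exists_one_add_sq_mul_abs_le (ψ : 𝓢(ℝ, ℝ)) :
    ∃ D, 0 < D ∧ ∀ y, (1 + y ^ 2) * |ψ y| ≤ D := by
  obtain ⟨C₂, hC₂, h₂⟩ := ψ.decay 2 0
  obtain ⟨C₀, hC₀, h₀⟩ := ψ.decay 0 0
  refine ⟨C₀ + C₂, by positivity, fun y => ?_⟩
  have h₂ := h₂ y
  have h₀ := h₀ y
  simp only [norm_iteratedFDeriv_zero, Real.norm_eq_abs, pow_zero, one_mul, sq_abs] at h₂ h₀
  linarith

theorem exists_abs_sub_le_div_one_add_sq_mul (φ : 𝓢(ℝ, ℝ)) :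
    ∃ D, 0 < D ∧ ∀ x z, 16 * z ^ 2 ≤ 1 + x ^ 2 →
      |φ x - φ (x - z)| ≤ D / (1 + x ^ 2) * |z| := by
  obtain ⟨D, hD, hφ'⟩ := exists_one_add_sq_mul_abs_le (derivCLM ℝ ℝ φ)
  refine ⟨4 * D, by positivity, fun x z hz => ?_⟩
  have hderiv : ∀ y ∈ Icc (x - |z|) (x + |z|), ‖deriv φ y‖ ≤ 4 * D / (1 + x ^ 2) := by
    intro y hy
    have hyx : (y - x) ^ 2 ≤ z ^ 2 := by
      rw [← sq_abs z]
      exact sq_le_sq' (by linarith [hy.1]) (by linarith [hy.2])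
    have hxy : 1 + x ^ 2 ≤ 4 * (1 + y ^ 2) := by nlinarith [sq_nonneg (x - 2 * y)]
    have := hφ' y
    rw [derivCLM_apply] at this
    rw [Real.norm_eq_abs, le_div_iff₀ (by positivity)]
    nlinarith [abs_nonneg (deriv φ y)]
  have hmvt := (convex_Icc _ _).norm_image_sub_le_of_norm_deriv_le
    (fun y _ => φ.differentiableAt) hderiv
    (show x - z ∈ Icc (x - |z|) (x + |z|) from
      ⟨by linarith [le_abs_self z], by linarith [neg_abs_le z]⟩)
    (show x ∈ Icc (x - |z|) (x + |z|) from
      ⟨by linarith [abs_nonneg z], by linarith [abs_nonneg z]⟩)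
  rwa [Real.norm_eq_abs, Real.norm_eq_abs, sub_sub_cancel] at hmvt

theorem exists_abs_fracDiffIntegral_three_halves_le (φ : 𝓢(ℝ, ℝ)) :
    ∃ K > 0, ∀ x, |fracDiffIntegral (3 / 2) φ x| ≤ K * (1 + x ^ 2) ^ (-(3:ℝ) / 4) := by
  obtain ⟨D₁, hD₁, hlip⟩ := exists_abs_sub_le_div_one_add_sq_mul φ
  obtain ⟨D₀, hD₀, hdecay⟩ := exists_one_add_sq_mul_abs_le φ
  set L := ∫ y, |φ y|
  have hL : 0 ≤ L := integral_nonneg fun y => abs_nonneg _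
  refine ⟨2 * D₁ + 8 * D₀ + 8 * L, by positivity, fun x => ?_⟩
  -- `u = ⟨x⟩ ^ (1/2)`; the window radius is `(u / 2) ^ 2 = ⟨x⟩ / 4`
  set u := (1 + x ^ 2) ^ (1 / 4 : ℝ)
  have hu : 0 < u := by positivity
  have hu₁ : 1 ≤ u := Real.one_le_rpow (by nlinarith [sq_nonneg x]) (by norm_num)
  have hu₄ : u ^ 4 = 1 + x ^ 2 := by
    rw [← Real.rpow_natCast, ← Real.rpow_mul (by positivity)]
    norm_num
  have hR : ∀ c : ℝ, ((u / 2) ^ 2) ^ c = (u / 2) ^ (2 * c) := fun c => by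
    rw [← Real.rpow_natCast_mul (by positivity)]
    norm_num
  have hA : ∀ z ∈ Icc (-(u / 2) ^ 2) ((u / 2) ^ 2), |φ x - φ (x - z)| ≤ D₁ / u ^ 4 * |z| :=
    fun z hz => hu₄ ▸ hlip x z (by nlinarith [hz.1, hz.2])
  have hφx : |φ x| ≤ D₀ / u ^ 4 := by
    rw [le_div_iff₀ (by positivity), hu₄, mul_comm]
    exact hdecay x
  have key := abs_fracDiffIntegral_le φ.integrable (s := 3 / 2) (by norm_num) (by norm_num)
    (by positivity) hA
  rw [hR, hR, hR, show (2:ℝ) * (2 - 3 / 2) = 1 by norm_num, Real.rpow_one,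
    show (2:ℝ) * (1 - 3 / 2) = -1 by norm_num, Real.rpow_neg_one,
    show (2:ℝ) * -(3 / 2) = -(3 : ℕ) by norm_num, Real.rpow_neg (by positivity),
    Real.rpow_natCast] at key
  rw [show -(3:ℝ) / 4 = 1 / 4 * -(3 : ℕ) by norm_num, Real.rpow_mul (by positivity),
    Real.rpow_neg hu.le, Real.rpow_natCast]
  calc |fracDiffIntegral (3 / 2) φ x| ≤ _ := key
    _ ≤ 2 * (D₁ / u ^ 4) * (u / 2) / (2 - 3 / 2) + 2 * (D₀ / u ^ 4) * (u / 2)⁻¹ / (3 / 2 - 1)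
        + ((u / 2) ^ 3)⁻¹ * L := by gcongr
    _ = (2 * D₁ + 8 * D₀ / u ^ 2 + 8 * L) * (u ^ 3)⁻¹ := by
        field_simp
        ring
    _ ≤ _ := by
        gcongr
        exact div_le_self (by positivity) (one_le_pow₀ hu₁)

end SchwartzMap

theorem stmt_12_general (φ : SchwartzMap ℝ ℝ) (Cf : ℝ) (hCf : 0 < Cf) :
    ∃ C > (0:ℝ), ∀ x : ℝ,
      |Cf * ∫ z : ℝ, (φ x - φ (x - z)) / |z| ^ ((3:ℝ)/2)|
        ≤ C * (1 + x ^ 2) ^ (-(3:ℝ)/4) := by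
  obtain ⟨K, hK, hbound⟩ := φ.exists_abs_fracDiffIntegral_three_halves_le
  refine ⟨Cf * K, by positivity, fun x => ?_⟩
  rw [abs_mul, abs_of_pos hCf, mul_assoc]
  exact mul_le_mul_of_nonneg_left (hbound x) hCf.le

/-- Decay of the `1/2`-fractional derivative (in singular-integral form) of a
Schwartz function: `|(√𝔇 φ)(x)| ≲ ⟨x⟩^{-3/2}`. -/
theorem stmt_12 (φ : SchwartzMap ℝ ℝ) (Cf : ℝ) (hCf : 0 < Cf)
    (hCfdef : 1 / Cf = ∫ z : ℝ, (1 - Real.cos (2 * Real.pi * z)) / |z| ^ ((3:ℝ)/2)) :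
    ∃ C > (0:ℝ), ∀ x : ℝ,
      |Cf * ∫ z : ℝ, (φ x - φ (x - z)) / |z| ^ ((3:ℝ)/2)|
        ≤ C * (1 + x ^ 2) ^ (-(3:ℝ)/4) :=
  stmt_12_general φ Cf hCf
end

section
/- Let a : ℝ → ℝ be smooth with compact support contained in (−1,1). For every λ > 0 there exists C > 0 such that for all ε ∈ (0,1] and all y, ζ ∈ ℝ, ∫_ℝ e^{−λ|y−z−ζ|}·|a(√ε·y) − a(√ε·(y−z))| / |z|^{3/2} dz ≤ C·(1+(y−ζ)²)^{−3/4}. -/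
open MeasureTheory
open Real Set

lemma my_div_le_div (a b c : ℝ) (h : a ≤ b) (hc : 0 ≤ c) : a / c ≤ b / c := by
  exact div_le_div_of_nonneg_right h hc

lemma integrable_of_even_on_Ioi {f : ℝ → ℝ} (heven : ∀ x, f (-x) = f x)
    (h : IntegrableOn f (Set.Ioi (0:ℝ))) : Integrable f := by
  have hIio : IntegrableOn f (Set.Iio (0:ℝ)) := by
    have h2 : Integrable ((Set.Ioi (0:ℝ)).indicator f) :=
      (integrable_indicator_iff measurableSet_Ioi).2 h
    have h3 := h2.comp_neg
    have heq : (fun x => (Set.Ioi (0:ℝ)).indicator f (-x)) = (Set.Iio (0:ℝ)).indicator f := by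
      funext x
      by_cases hx : x < 0 <;>
        simp [Set.indicator_apply, hx, neg_pos, heven x, not_lt.2, le_of_lt]
    rw [heq] at h3
    exact (integrable_indicator_iff measurableSet_Iio).1 h3
  have hIci : IntegrableOn f (Set.Ici (0:ℝ)) := by
    rwa [integrableOn_Ici_iff_integrableOn_Ioi]
  have := hIio.union hIci
  rwa [Set.Iio_union_Ici, integrableOn_univ] at this

lemma g_integrable {M K : ℝ} (hM : 0 ≤ M) (hK : 0 ≤ K) :
    Integrable (fun z : ℝ => min M (K * |z|) / |z| ^ ((3:ℝ)/2)) := by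
  set g : ℝ → ℝ := fun z => min M (K * |z|) / |z| ^ ((3:ℝ)/2) with hg
  have hgnonneg : ∀ z, 0 ≤ g z := fun z => by
    apply div_nonneg (le_min hM (by positivity)) (by positivity)
  have hgmeas : AEStronglyMeasurable g (volume : Measure ℝ) := by
    apply Measurable.aestronglyMeasurable
    exact (measurable_const.min (measurable_abs.const_mul K)).div
      (measurable_abs.pow_const _)
  have heven : ∀ x, g (-x) = g x := fun x => by simp [hg, abs_neg]
  apply integrable_of_even_on_Ioi heven
  have hIoc : IntegrableOn g (Set.Ioc (0:ℝ) 1) := by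
    have hbint : IntegrableOn (fun z : ℝ => K * z ^ (-(1:ℝ)/2)) (Set.Ioc (0:ℝ) 1) :=
      ((intervalIntegrable_iff_integrableOn_Ioc_of_le zero_le_one).1
        (intervalIntegral.intervalIntegrable_rpow' (by norm_num))).const_mul K
    refine hbint.mono' (hgmeas.restrict) ?_
    rw [ae_restrict_iff' measurableSet_Ioc]
    refine ae_of_all _ fun z hz => ?_
    have hz0 : 0 < z := hz.1
    rw [Real.norm_of_nonneg (hgnonneg z)]
    show min M (K * |z|) / |z| ^ ((3:ℝ)/2) ≤ _
    rw [abs_of_pos hz0]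
    have key : (K * z) / z ^ ((3:ℝ)/2) = K * z ^ (-(1:ℝ)/2) := by
      rw [mul_div_assoc]
      congr 1
      rw [show (-(1:ℝ)/2) = -((1:ℝ)/2) by norm_num,
        div_eq_iff (by positivity : (z:ℝ) ^ ((3:ℝ)/2) ≠ 0), ← Real.rpow_add hz0]
      norm_num
    rw [← key]
    exact my_div_le_div _ _ _ (min_le_right _ _) (by positivity)
  have hIoi1 : IntegrableOn g (Set.Ioi (1:ℝ)) := by
    have hbint : IntegrableOn (fun z : ℝ => M * z ^ (-(3:ℝ)/2)) (Set.Ioi (1:ℝ)) :=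
      (integrableOn_Ioi_rpow_of_lt (by norm_num) one_pos).const_mul M
    refine hbint.mono' (hgmeas.restrict) ?_
    rw [ae_restrict_iff' measurableSet_Ioi]
    refine ae_of_all _ fun z hz => ?_
    have hz0 : (0:ℝ) < z := lt_trans one_pos hz
    rw [Real.norm_of_nonneg (hgnonneg z)]
    show min M (K * |z|) / |z| ^ ((3:ℝ)/2) ≤ _
    rw [abs_of_pos hz0]
    have key : M / z ^ ((3:ℝ)/2) = M * z ^ (-(3:ℝ)/2) := by
      rw [show (-(3:ℝ)/2) = -((3:ℝ)/2) by norm_num, Real.rpow_neg hz0.le, div_eq_mul_inv]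
    rw [← key]
    exact my_div_le_div _ _ _ (min_le_left _ _) (by positivity)
  have : IntegrableOn g (Set.Ioc (0:ℝ) 1 ∪ Set.Ioi 1) := hIoc.union hIoi1
  rwa [Set.Ioc_union_Ioi_eq_Ioi zero_le_one] at this

lemma exp_abs_integrable {lam : ℝ} (hlam : 0 < lam) :
    Integrable (fun u : ℝ => Real.exp (-(lam * |u|))) := by
  apply integrable_of_even_on_Ioi
  · intro x; simp [abs_neg]
  · refine (exp_neg_integrableOn_Ioi 0 hlam).congr_fun (fun x hx => ?_) measurableSet_Ioi
    rw [abs_of_pos hx]; ring_nf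

set_option maxHeartbeats 1000000

/-- Weighted singular-integral bound for increments of the rescaled cutoff `a_ε`:
`∫ e^{−λ|y−z−ζ|} |a(√ε y) − a(√ε (y−z))| / |z|^{3/2} dz ≲ ⟨y−ζ⟩^{−3/2}`. -/
theorem stmt_16 (a : ℝ → ℝ) (ha : ContDiff ℝ (⊤ : ℕ∞) a)
    (hsupp : Function.support a ⊆ Set.Ioo (-1 : ℝ) 1)
    (lam : ℝ) (hlam : 0 < lam) :
    ∃ C > (0:ℝ), ∀ ε ∈ Set.Ioc (0:ℝ) 1, ∀ y ζ : ℝ,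
      (∫ z : ℝ,
          Real.exp (-lam * |y - z - ζ|) * |a (Real.sqrt ε * y) - a (Real.sqrt ε * (y - z))| /
            |z| ^ ((3:ℝ)/2))
        ≤ C * (1 + (y - ζ) ^ 2) ^ (-(3:ℝ)/4) := by
  -- compact support
  have hcs : HasCompactSupport a := by
    apply HasCompactSupport.intro (isCompact_Icc (a := (-1:ℝ)) (b := 1))
    intro x hx
    by_contra h
    exact hx (Set.Ioo_subset_Icc_self (hsupp (Function.mem_support.2 h)))
  obtain ⟨M, hM⟩ := ha.continuous.bounded_above_of_compact_support hcs
  have hM0 : 0 ≤ M := le_trans (norm_nonneg (a 0)) (hM 0)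
  obtain ⟨K, hK⟩ := (ha.continuous_deriv (by simp)).bounded_above_of_compact_support hcs.deriv
  set K' : ℝ := max K 0 with hK'def
  have hK'0 : 0 ≤ K' := le_max_right _ _
  have hlip : LipschitzWith (Real.toNNReal K') a := by
    apply lipschitzWith_of_nnnorm_deriv_le (ha.differentiable (by simp))
    intro x
    rw [← norm_toNNReal]
    exact Real.toNNReal_mono ((hK x).trans (le_max_left K 0))
  have hlip' : ∀ u v : ℝ, |a u - a v| ≤ K' * |u - v| := by
    intro u v
    have h := hlip.dist_le_mul u v
    rw [Real.dist_eq, Real.dist_eq, Real.coe_toNNReal _ hK'0] at h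
    exact h
  have hgint := g_integrable (by positivity : (0:ℝ) ≤ 2*M) hK'0
  have hEint := exp_abs_integrable hlam
  set I₁ : ℝ := ∫ z : ℝ, min (2*M) (K' * |z|) / |z| ^ ((3:ℝ)/2) with hI₁def
  set E : ℝ := ∫ u : ℝ, Real.exp (-(lam * |u|)) with hEdef
  have hI₁0 : 0 ≤ I₁ := integral_nonneg (fun z => by positivity)
  have hE0 : 0 ≤ E := integral_nonneg (fun u => (Real.exp_pos _).le)
  have h34pos : (0:ℝ) < 2 ^ ((3:ℝ)/4) := Real.rpow_pos_of_pos two_pos _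
  have h32pos : (0:ℝ) < 2 ^ ((3:ℝ)/2) := Real.rpow_pos_of_pos two_pos _
  set D : ℝ := 16/lam^2 * I₁ + 2*M*2^((3:ℝ)/2)*E with hDdef
  have hD0 : 0 ≤ D := by
    have h1 : 0 ≤ 16/lam^2 * I₁ := mul_nonneg (by positivity) hI₁0
    have h2 : 0 ≤ 2*M*2^((3:ℝ)/2)*E := mul_nonneg (mul_nonneg (by positivity) h32pos.le) hE0
    rw [hDdef]; linarith
  set C : ℝ := 2^((3:ℝ)/4) * (I₁ + D) + 1 with hCdef
  have hC0 : 0 < C := by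
    have := mul_nonneg h34pos.le (add_nonneg hI₁0 hD0)
    rw [hCdef]; linarith
  refine ⟨C, hC0, ?_⟩
  intro ε hε y ζ
  set s : ℝ := Real.sqrt ε with hs
  have hs0 : 0 ≤ s := Real.sqrt_nonneg _
  have hs1 : s ≤ 1 := Real.sqrt_le_one.2 hε.2
  set w : ℝ := y - ζ with hw
  -- increment bound
  have hinc : ∀ z : ℝ, |a (s*y) - a (s*(y-z))| ≤ min (2*M) (K' * |z|) := by
    intro z
    refine le_min ?_ ?_
    · have h1 := hM (s*y); have h2 := hM (s*(y-z))
      rw [Real.norm_eq_abs] at h1 h2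
      have := abs_sub (a (s*y)) (a (s*(y-z)))
      linarith
    · have h := hlip' (s*y) (s*(y-z))
      have heq : s*y - s*(y-z) = s*z := by ring
      rw [heq, abs_mul, abs_of_nonneg hs0] at h
      refine h.trans (mul_le_mul_of_nonneg_left ?_ hK'0)
      nlinarith [abs_nonneg z]
  have hexp_eq : ∀ z : ℝ, Real.exp (-lam * |y - z - ζ|) = Real.exp (-(lam * |w - z|)) := by
    intro z
    congr 1
    rw [show y - z - ζ = w - z by rw [hw]; ring]
    ring
  have hfnonneg : ∀ z : ℝ,
      0 ≤ Real.exp (-lam * |y - z - ζ|) * |a (s*y) - a (s*(y-z))| / |z|^((3:ℝ)/2) :=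
    fun z => by positivity
  have hfF : ∀ z : ℝ,
      Real.exp (-lam * |y - z - ζ|) * |a (s*y) - a (s*(y-z))| / |z|^((3:ℝ)/2)
        ≤ Real.exp (-(lam * |w - z|)) * min (2*M) (K' * |z|) / |z|^((3:ℝ)/2) := by
    intro z
    rw [hexp_eq z]
    exact my_div_le_div _ _ _
      (mul_le_mul_of_nonneg_left (hinc z) (Real.exp_pos _).le) (by positivity)
  rcases le_or_gt |w| 1 with hw1 | hw1
  · -- small w
    have hmono : (∫ z : ℝ,
        Real.exp (-lam * |y - z - ζ|) * |a (s*y) - a (s*(y-z))| / |z|^((3:ℝ)/2)) ≤ I₁ := by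
      refine integral_mono_of_nonneg (ae_of_all _ hfnonneg) hgint (ae_of_all _ fun z => ?_)
      refine (hfF z).trans ?_
      have hexple : Real.exp (-(lam * |w - z|)) ≤ 1 := by
        rw [Real.exp_le_one_iff]
        have : 0 ≤ lam * |w - z| := mul_nonneg hlam.le (abs_nonneg _)
        linarith
      have hminn : 0 ≤ min (2*M) (K' * |z|) := le_min (by positivity) (by positivity)
      refine (my_div_le_div _ _ _ (mul_le_mul_of_nonneg_right hexple hminn) (by positivity)).trans ?_
      rw [one_mul]
    have hbase : (1:ℝ) + w^2 ≤ 2 := by nlinarith [sq_abs w, abs_nonneg w]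
    have hpos : (0:ℝ) < 1 + w^2 := by positivity
    have h24 : (2:ℝ)^(-(3:ℝ)/4) ≤ (1+w^2)^(-(3:ℝ)/4) :=
      Real.rpow_le_rpow_of_nonpos hpos hbase (by norm_num)
    have hprod : (2:ℝ)^((3:ℝ)/4) * (2:ℝ)^(-(3:ℝ)/4) = 1 := by
      rw [← Real.rpow_add two_pos]; norm_num
    have hCge : 2^((3:ℝ)/4) * I₁ ≤ C := by
      have := mul_nonneg h34pos.le hD0
      rw [hCdef]; nlinarith
    calc (∫ z : ℝ,
        Real.exp (-lam * |y - z - ζ|) * |a (s*y) - a (s*(y-z))| / |z|^((3:ℝ)/2))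
        ≤ I₁ := hmono
      _ = (2^((3:ℝ)/4) * I₁) * 2^(-(3:ℝ)/4) := by
          rw [mul_comm ((2:ℝ)^((3:ℝ)/4)) I₁, mul_assoc, hprod, mul_one]
      _ ≤ C * 2^(-(3:ℝ)/4) :=
          mul_le_mul_of_nonneg_right hCge (Real.rpow_pos_of_pos two_pos _).le
      _ ≤ C * (1+w^2)^(-(3:ℝ)/4) := mul_le_mul_of_nonneg_left h24 hC0.le
  · -- large w
    have hw0 : (0:ℝ) < |w| := lt_trans one_pos hw1
    have hQpos : (0:ℝ) < |w|^((3:ℝ)/2) := Real.rpow_pos_of_pos hw0 _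
    have hQineg : |w|^(-(3:ℝ)/2) = (|w|^((3:ℝ)/2))⁻¹ := by
      rw [show (-(3:ℝ)/2) = -((3:ℝ)/2) by norm_num, Real.rpow_neg (abs_nonneg w)]
    set c2 : ℝ := 2*M*2^((3:ℝ)/2) * |w|^(-(3:ℝ)/2) with hc2
    have hc20 : 0 ≤ c2 := by
      rw [hc2]
      exact mul_nonneg (mul_nonneg (by linarith) h32pos.le) (by rw [hQineg]; positivity)
    have hpt : ∀ z : ℝ, Real.exp (-(lam * |w - z|)) * min (2*M) (K' * |z|) / |z|^((3:ℝ)/2)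
        ≤ Real.exp (-(lam * (|w|/2))) * (min (2*M) (K' * |z|) / |z|^((3:ℝ)/2))
          + c2 * Real.exp (-(lam * |w - z|)) := by
      intro z
      have hminn : 0 ≤ min (2*M) (K' * |z|) := le_min (by linarith) (by positivity)
      rcases le_or_gt (|w|/2) |z| with hz | hz
      · have hzp : (0:ℝ) < |w|/2 := by linarith
        have hpw : (|w|/2)^((3:ℝ)/2) ≤ |z|^((3:ℝ)/2) :=
          Real.rpow_le_rpow hzp.le hz (by norm_num)
        have hdiv : min (2*M) (K'*|z|) / |z|^((3:ℝ)/2) ≤ (2*M) / (|w|/2)^((3:ℝ)/2) :=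
          div_le_div₀ (by linarith) (min_le_left _ _) (Real.rpow_pos_of_pos hzp _) hpw
        have hval : (2*M) / (|w|/2)^((3:ℝ)/2) = c2 := by
          rw [hc2, Real.div_rpow (abs_nonneg w) (by norm_num : (0:ℝ) ≤ 2), hQineg]
          rw [div_div_eq_mul_div, div_eq_mul_inv, mul_assoc]
        have step : Real.exp (-(lam * |w - z|)) * min (2*M) (K' * |z|) / |z|^((3:ℝ)/2)
            ≤ c2 * Real.exp (-(lam * |w - z|)) := by
          rw [mul_div_assoc, mul_comm c2]
          exact mul_le_mul_of_nonneg_left (hdiv.trans_eq hval) (Real.exp_pos _).le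
        refine step.trans (le_add_of_nonneg_left ?_)
        exact mul_nonneg (Real.exp_pos _).le (div_nonneg hminn (by positivity))
      · have habs : |w|/2 ≤ |w - z| := by
          have := abs_sub_abs_le_abs_sub w z
          linarith
        have hexp : Real.exp (-(lam * |w - z|)) ≤ Real.exp (-(lam * (|w|/2))) := by
          apply Real.exp_le_exp.2
          have := mul_le_mul_of_nonneg_left habs hlam.le
          linarith
        have step : Real.exp (-(lam * |w - z|)) * min (2*M) (K' * |z|) / |z|^((3:ℝ)/2)
            ≤ Real.exp (-(lam * (|w|/2))) * (min (2*M) (K' * |z|) / |z|^((3:ℝ)/2)) := by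
          rw [mul_div_assoc]
          exact mul_le_mul_of_nonneg_right hexp (div_nonneg hminn (by positivity))
        refine step.trans (le_add_of_nonneg_right ?_)
        exact mul_nonneg hc20 (Real.exp_pos _).le
    have hF1 : Integrable (fun z : ℝ =>
        Real.exp (-(lam * (|w|/2))) * (min (2*M) (K' * |z|) / |z|^((3:ℝ)/2))) :=
      hgint.const_mul _
    have hF2 : Integrable (fun z : ℝ => c2 * Real.exp (-(lam * |w - z|))) :=
      (hEint.comp_sub_left w).const_mul _
    have hFint := hF1.add hF2
    have hineq : (∫ z : ℝ,
        Real.exp (-lam * |y - z - ζ|) * |a (s*y) - a (s*(y-z))| / |z|^((3:ℝ)/2))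
        ≤ ∫ z : ℝ, (Real.exp (-(lam * (|w|/2))) * (min (2*M) (K' * |z|) / |z|^((3:ℝ)/2))
          + c2 * Real.exp (-(lam * |w - z|))) := by
      refine integral_mono_of_nonneg (ae_of_all _ hfnonneg) hFint (ae_of_all _ fun z => ?_)
      exact (hfF z).trans (hpt z)
    have hval2 : (∫ z : ℝ, (Real.exp (-(lam * (|w|/2))) * (min (2*M) (K' * |z|) / |z|^((3:ℝ)/2))
          + c2 * Real.exp (-(lam * |w - z|))))
        = Real.exp (-(lam * (|w|/2))) * I₁ + c2 * E := by
      rw [integral_add hF1 hF2, integral_const_mul, integral_const_mul]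
      rw [integral_sub_left_eq_self (fun u : ℝ => Real.exp (-(lam * |u|))) volume w]
    rw [hval2] at hineq
    -- exponential decay bound
    have hl0 : lam ≠ 0 := hlam.ne'
    have hw0' : |w| ≠ 0 := hw0.ne'
    have hexpb : Real.exp (-(lam * (|w|/2))) ≤ 16/lam^2 * |w|^(-(3:ℝ)/2) := by
      have e1 : lam*|w|/4 + 1 ≤ Real.exp (lam*|w|/4) := Real.add_one_le_exp _
      have e0 : (0:ℝ) ≤ lam*|w|/4 := by positivity
      have e2 : (lam*|w|/4)^2 ≤ Real.exp (lam*|w|/4)^2 := by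
        nlinarith [Real.exp_pos (lam*|w|/4)]
      have e3 : Real.exp (lam*|w|/4)^2 = Real.exp (lam * (|w|/2)) := by
        rw [sq, ← Real.exp_add]; ring_nf
      have e4 : (lam*|w|/4)^2 ≤ Real.exp (lam*(|w|/2)) := e3 ▸ e2
      have hsq : (0:ℝ) < (lam*|w|/4)^2 := by positivity
      have e6 : Real.exp (-(lam*(|w|/2))) ≤ ((lam*|w|/4)^2)⁻¹ := by
        rw [Real.exp_neg]
        exact inv_anti₀ hsq e4
      have e7 : ((lam*|w|/4)^2)⁻¹ = 16/(lam^2 * |w|^2) := by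
        rw [div_pow, mul_pow, inv_div]
        norm_num
      have e8 : |w|^((3:ℝ)/2) ≤ |w|^2 := by
        calc |w|^((3:ℝ)/2) ≤ |w|^((2:ℝ)) :=
              Real.rpow_le_rpow_of_exponent_le hw1.le (by norm_num)
          _ = |w|^2 := by
              rw [show ((2:ℝ)) = ((2:ℕ):ℝ) by norm_num, Real.rpow_natCast]
      have e9 : 16/(lam^2 * |w|^2) ≤ 16/lam^2 * |w|^(-(3:ℝ)/2) := by
        rw [hQineg, show 16/(lam^2*|w|^2) = 16/lam^2 * (|w|^2)⁻¹ by
          rw [← div_div, div_eq_mul_inv]]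
        exact mul_le_mul_of_nonneg_left (inv_anti₀ hQpos e8) (by positivity)
      calc Real.exp (-(lam*(|w|/2))) ≤ ((lam*|w|/4)^2)⁻¹ := e6
        _ = 16/(lam^2 * |w|^2) := e7
        _ ≤ 16/lam^2 * |w|^(-(3:ℝ)/2) := e9
    have hinter : (∫ z : ℝ,
        Real.exp (-lam * |y - z - ζ|) * |a (s*y) - a (s*(y-z))| / |z|^((3:ℝ)/2))
        ≤ D * |w|^(-(3:ℝ)/2) := by
      have t1 : Real.exp (-(lam*(|w|/2))) * I₁ ≤ 16/lam^2 * |w|^(-(3:ℝ)/2) * I₁ :=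
        mul_le_mul_of_nonneg_right hexpb hI₁0
      have expand : D * |w|^(-(3:ℝ)/2)
          = 16/lam^2 * |w|^(-(3:ℝ)/2) * I₁ + c2 * E := by
        rw [hDdef, hc2]; ring
      linarith
    have hPpos : (0:ℝ) < (1+w^2)^((3:ℝ)/4) := Real.rpow_pos_of_pos (by positivity) _
    have hPQ : (1+w^2)^((3:ℝ)/4) ≤ 2^((3:ℝ)/4) * |w|^((3:ℝ)/2) := by
      have h1 : (1:ℝ)+w^2 ≤ 2*w^2 := by nlinarith [sq_abs w]
      have h2 : ((1:ℝ)+w^2)^((3:ℝ)/4) ≤ (2*w^2)^((3:ℝ)/4) :=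
        Real.rpow_le_rpow (by positivity) h1 (by norm_num)
      have h3 : ((2:ℝ)*w^2)^((3:ℝ)/4) = 2^((3:ℝ)/4) * (w^2)^((3:ℝ)/4) :=
        Real.mul_rpow (by norm_num) (sq_nonneg w)
      have h4 : (w^2)^((3:ℝ)/4) = |w|^((3:ℝ)/2) := by
        rw [← sq_abs w, ← Real.rpow_natCast |w| 2, ← Real.rpow_mul (abs_nonneg w)]
        norm_num
      rw [h3, h4] at h2
      exact h2
    have hkey : |w|^(-(3:ℝ)/2) ≤ 2^((3:ℝ)/4) * (1+w^2)^(-(3:ℝ)/4) := by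
      have hPneg : (1+w^2)^(-(3:ℝ)/4) = ((1+w^2)^((3:ℝ)/4))⁻¹ := by
        rw [show (-(3:ℝ)/4) = -((3:ℝ)/4) by norm_num, Real.rpow_neg (by positivity)]
      rw [hQineg, hPneg]
      have h2 : (2^((3:ℝ)/4) * |w|^((3:ℝ)/2))⁻¹ ≤ ((1+w^2)^((3:ℝ)/4))⁻¹ :=
        inv_anti₀ hPpos hPQ
      have h3 : (|w|^((3:ℝ)/2))⁻¹ = 2^((3:ℝ)/4) * (2^((3:ℝ)/4) * |w|^((3:ℝ)/2))⁻¹ := by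
        rw [mul_inv, ← mul_assoc, mul_inv_cancel₀ h34pos.ne', one_mul]
      rw [h3]
      exact mul_le_mul_of_nonneg_left h2 h34pos.le
    have hCge2 : 2^((3:ℝ)/4) * D ≤ C := by
      have := mul_nonneg h34pos.le hI₁0
      rw [hCdef]; nlinarith
    calc (∫ z : ℝ,
        Real.exp (-lam * |y - z - ζ|) * |a (s*y) - a (s*(y-z))| / |z|^((3:ℝ)/2))
        ≤ D * |w|^(-(3:ℝ)/2) := hinter
      _ ≤ D * (2^((3:ℝ)/4) * (1+w^2)^(-(3:ℝ)/4)) := mul_le_mul_of_nonneg_left hkey hD0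
      _ = (2^((3:ℝ)/4) * D) * (1+w^2)^(-(3:ℝ)/4) := by ring
      _ ≤ C * (1+w^2)^(-(3:ℝ)/4) := by
          refine mul_le_mul_of_nonneg_right hCge2 ?_
          positivity
end

section
/- For every μ > 0 there exists C > 0 such that for all η, a, b ∈ ℝ: (i) 1/(4π²((η−a)² + (η−b)²) + 2μ) ≤ C·(1+a²)/(1+η²); and (ii) |1/(4π²((η−a)² + (η−b)²) + 2μ) − 1/(8π²η² + 2μ)| ≤ C·(|a+b|·|η| + a² + b²)·(1+a²)/(1+η²)². -/
/-!
With `c = 4π²` and `m = 2μ`, write `D₁ = c((η-a)² + (η-b)²) + m` and `D₂ = 2cη² + m`.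
Both dominate `1 + x²` up to the constant `K = c⁻¹ + m⁻¹` (with `x = η - a` for `D₁`, `x = η` for
`D₂`), and Peetre's inequality `1 + η² ≤ 2(1 + a²)(1 + (η - a)²)` moves the weight from `η - a`
to `η`; this gives (i). For (ii), `D₂ - D₁ = c(2(a + b)η - a² - b²)` is bounded by
`2c(|a + b||η| + a² + b²)`, and `|1/D₁ - 1/D₂| = |D₂ - D₁| / (D₁D₂)` is then controlled by (i)
together with `1/D₂ ≤ K/(1 + η²)`.
-/

open Real

lemma one_add_sq_le_two_mul_one_add_sq_mul (η a : ℝ) :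
    1 + η ^ 2 ≤ 2 * (1 + a ^ 2) * (1 + (η - a) ^ 2) := by
  nlinarith [sq_nonneg (η - 2 * a), mul_nonneg (sq_nonneg a) (sq_nonneg (η - a))]

lemma abs_diagonal_sub_shifted_le {c : ℝ} (hc : 0 ≤ c) (m η a b : ℝ) :
    |(2 * c * η ^ 2 + m) - (c * ((η - a) ^ 2 + (η - b) ^ 2) + m)|
      ≤ 2 * c * (|a + b| * |η| + a ^ 2 + b ^ 2) := by
  have hdiff : (2 * c * η ^ 2 + m) - (c * ((η - a) ^ 2 + (η - b) ^ 2) + m)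
      = c * (2 * ((a + b) * η) - (a ^ 2 + b ^ 2)) := by ring
  rw [hdiff, abs_mul, abs_of_nonneg hc, ← abs_mul]
  have hsq : 0 ≤ a ^ 2 + b ^ 2 := by positivity
  have hinner : |2 * ((a + b) * η) - (a ^ 2 + b ^ 2)| ≤ 2 * (|(a + b) * η| + a ^ 2 + b ^ 2) := by
    rw [abs_le]
    constructor <;> linarith [le_abs_self ((a + b) * η), neg_abs_le ((a + b) * η)]
  nlinarith [mul_le_mul_of_nonneg_left hinner hc]

lemma one_div_le_div_of_le_mul {w L D : ℝ} (hw : 0 < w) (hD : 0 < D) (h : w ≤ L * D) :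
    1 / D ≤ L / w := by
  rw [div_le_div_iff₀ hD hw]
  linarith

section Resolvent

variable {c m : ℝ} (hc : 0 < c) (hm : 0 < m)
include hc hm

lemma one_add_sq_le_inv_add_inv_mul (x : ℝ) :
    1 + x ^ 2 ≤ (c⁻¹ + m⁻¹) * (c * x ^ 2 + m) := by
  have expand : (c⁻¹ + m⁻¹) * (c * x ^ 2 + m) = 1 + x ^ 2 + (m / c + c * x ^ 2 / m) := by
    field_simp
    ring
  rw [expand]
  have : 0 ≤ m / c + c * x ^ 2 / m := by positivity
  linarith

lemma one_add_sq_le_shifted (η a b : ℝ) :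
    1 + η ^ 2 ≤ 2 * (c⁻¹ + m⁻¹) * (1 + a ^ 2) * (c * ((η - a) ^ 2 + (η - b) ^ 2) + m) := by
  have hK : 0 ≤ c⁻¹ + m⁻¹ := by positivity
  calc 1 + η ^ 2 ≤ 2 * (1 + a ^ 2) * (1 + (η - a) ^ 2) :=
        one_add_sq_le_two_mul_one_add_sq_mul η a
    _ ≤ 2 * (1 + a ^ 2) * ((c⁻¹ + m⁻¹) * (c * ((η - a) ^ 2 + (η - b) ^ 2) + m)) := by
        gcongr
        refine (one_add_sq_le_inv_add_inv_mul hc hm _).trans ?_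
        gcongr
        exact le_add_of_nonneg_right (sq_nonneg _)
    _ = _ := by ring

lemma one_add_sq_le_diagonal (η : ℝ) :
    1 + η ^ 2 ≤ (c⁻¹ + m⁻¹) * (2 * c * η ^ 2 + m) := by
  have hK : 0 ≤ c⁻¹ + m⁻¹ := by positivity
  refine (one_add_sq_le_inv_add_inv_mul hc hm η).trans ?_
  gcongr
  nlinarith [mul_nonneg hc.le (sq_nonneg η)]

lemma one_div_shifted_le (η a b : ℝ) :
    1 / (c * ((η - a) ^ 2 + (η - b) ^ 2) + m)
      ≤ 2 * (c⁻¹ + m⁻¹) * (1 + a ^ 2) / (1 + η ^ 2) :=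
  one_div_le_div_of_le_mul (by positivity) (by positivity) (one_add_sq_le_shifted hc hm η a b)

lemma abs_one_div_shifted_sub_one_div_diagonal_le (η a b : ℝ) :
    |1 / (c * ((η - a) ^ 2 + (η - b) ^ 2) + m) - 1 / (2 * c * η ^ 2 + m)|
      ≤ 4 * c * (c⁻¹ + m⁻¹) ^ 2 * (|a + b| * |η| + a ^ 2 + b ^ 2) * (1 + a ^ 2)
          / (1 + η ^ 2) ^ 2 := by
  set D₁ := c * ((η - a) ^ 2 + (η - b) ^ 2) + m
  set D₂ := 2 * c * η ^ 2 + m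
  set K := c⁻¹ + m⁻¹
  set S := |a + b| * |η| + a ^ 2 + b ^ 2
  have hD₁ : 0 < D₁ := by positivity
  have hD₂ : 0 < D₂ := by positivity
  have hS : 0 ≤ S := by positivity
  have hinv₁ : 1 / D₁ ≤ 2 * K * (1 + a ^ 2) / (1 + η ^ 2) := one_div_shifted_le hc hm η a b
  have hinv₂ : 1 / D₂ ≤ K / (1 + η ^ 2) :=
    one_div_le_div_of_le_mul (by positivity) hD₂ (one_add_sq_le_diagonal hc hm η)
  calc |1 / D₁ - 1 / D₂| = |D₂ - D₁| * (1 / D₁) * (1 / D₂) := by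
        rw [div_sub_div _ _ hD₁.ne' hD₂.ne', abs_div, abs_of_pos (mul_pos hD₁ hD₂)]
        field_simp
    _ ≤ 2 * c * S * (2 * K * (1 + a ^ 2) / (1 + η ^ 2)) * (K / (1 + η ^ 2)) := by
        gcongr
        exact abs_diagonal_sub_shifted_le hc.le m η a b
    _ = _ := by field_simp; ring

end Resolvent

/-- Resolvent comparison inequalities used for the spatial correlation of the
stationary linearized solution. -/
theorem stmt_18 (μ : ℝ) (hμ : 0 < μ) :
    ∃ C > (0:ℝ), ∀ η a b : ℝ,
      (1 / (4 * Real.pi ^ 2 * ((η - a) ^ 2 + (η - b) ^ 2) + 2 * μ)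
          ≤ C * (1 + a ^ 2) / (1 + η ^ 2)) ∧
      |1 / (4 * Real.pi ^ 2 * ((η - a) ^ 2 + (η - b) ^ 2) + 2 * μ)
          - 1 / (8 * Real.pi ^ 2 * η ^ 2 + 2 * μ)|
        ≤ C * (|a + b| * |η| + a ^ 2 + b ^ 2) * (1 + a ^ 2) / (1 + η ^ 2) ^ 2 := by
  have hc : 0 < 4 * π ^ 2 := by positivity
  have hm : 0 < 2 * μ := by positivity
  set K := (4 * π ^ 2)⁻¹ + (2 * μ)⁻¹
  have hK : 0 < K := by positivity
  refine ⟨2 * K + 4 * (4 * π ^ 2) * K ^ 2, by positivity, fun η a b => ⟨?_, ?_⟩⟩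
  · refine (one_div_shifted_le hc hm η a b).trans ?_
    gcongr
    exact le_add_of_nonneg_right (by positivity)
  · have hdiag : 8 * π ^ 2 * η ^ 2 = 2 * (4 * π ^ 2) * η ^ 2 := by ring
    rw [hdiag]
    refine (abs_one_div_shifted_sub_one_div_diagonal_le hc hm η a b).trans ?_
    gcongr
    linarith
end

section
/- For every μ > 0 there exists C > 0 such that for every w ∈ ℝ with 0 < |w| ≤ 1/2, the improper integral F(w) := lim_{R→∞} ∫_0^R 2η·cos(2πηw)/(8π²η² + 2μ) dη exists and satisfies |F(w)| ≤ C·log(1/|w|). -/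
/-!
Put `g(η) = 2η / (bη² + c)` with `b = 8π²`, `c = 2μ`, and `a = 2π|w|`. On `[0, 1/a]` bound
`|g(η) cos(aη)|` by `g(η) = (log (1 + bη²/c) / b)'`, which contributes
`log (1 + b/(c a²)) / b ≤ (log (1 + 1/μ) + 2 log (1/|w|)) / b`. Beyond `1/a`, integrate by parts
against `sin(aη)/a`: since `|g(η)|` and `∫_η^∞ |g'|` are both at most `2/(bη)`, the tail converges
and is bounded by `4/b` uniformly in `a`. Finally `log (1/|w|) ≥ log 2` absorbs the constants.
-/

open Filter MeasureTheory intervalIntegral Real Set Topology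

lemma hasDerivAt_sin_mul_div {a : ℝ} (ha : a ≠ 0) (x : ℝ) :
    HasDerivAt (fun η => sin (a * η) / a) (cos (a * x)) x := by
  simpa [ha] using (((hasDerivAt_id x).const_mul a).sin).div_const a

/-- Dirichlet's test for `∫ g(η) cos(aη) dη`, via one integration by parts. -/
lemma exists_tendsto_intervalIntegral_mul_cos {g g' : ℝ → ℝ} {a t : ℝ} (ha : a ≠ 0)
    (hg : ∀ x ∈ Ici t, HasDerivAt g (g' x) x) (hg' : IntegrableOn g' (Ioi t))
    (hg_tendsto : Tendsto g atTop (𝓝 0)) :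
    ∃ T, Tendsto (fun R => ∫ η in t..R, g η * cos (a * η)) atTop (𝓝 T) ∧
      |T| ≤ (|g t| + ∫ η in Ioi t, |g' η|) / |a| := by
  set s : ℝ → ℝ := fun η => sin (a * η) / a
  have hs_le : ∀ η, ‖s η‖ ≤ 1 / |a| := fun η => by
    rw [Real.norm_eq_abs, abs_div]
    exact div_le_div_of_nonneg_right (abs_sin_le_one _) (abs_nonneg a)
  have hs_cont : Continuous s := by fun_prop
  have hg's : IntegrableOn (fun η => g' η * s η) (Ioi t) :=
    hg'.mul_bdd hs_cont.aestronglyMeasurable (ae_of_all _ hs_le)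
  have hparts : ∀ᶠ R in atTop, g R * s R - g t * s t - ∫ η in t..R, g' η * s η =
      ∫ η in t..R, g η * cos (a * η) := by
    filter_upwards [eventually_ge_atTop t] with R hR
    refine (intervalIntegral.integral_mul_deriv_eq_deriv_mul (fun x hx => hg x ?_)
      (fun x _ => hasDerivAt_sin_mul_div ha x)
      ((intervalIntegrable_iff_integrableOn_Ioc_of_le hR).2 (hg'.mono_set Ioc_subset_Ioi_self))
      ((by fun_prop : Continuous fun η => cos (a * η)).intervalIntegrable t R)).symm
    exact (uIcc_of_le hR ▸ hx).1
  have hboundary : Tendsto (fun R => g R * s R) atTop (𝓝 0) :=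
    hg_tendsto.zero_mul_isBoundedUnder_le ⟨1 / |a|, eventually_map.2 (Eventually.of_forall hs_le)⟩
  refine ⟨0 - g t * s t - ∫ η in Ioi t, g' η * s η, ?_, ?_⟩
  · exact ((hboundary.sub_const _).sub
      (intervalIntegral_tendsto_integral_Ioi t hg's tendsto_id)).congr' hparts
  · have htail : |∫ η in Ioi t, g' η * s η| ≤ ∫ η in Ioi t, |g' η| / |a| :=
      norm_integral_le_of_norm_le (hg'.norm.div_const _) <| ae_of_all _ fun η => by
        rw [norm_mul (g' η), div_eq_mul_one_div]
        exact mul_le_mul_of_nonneg_left (hs_le η) (norm_nonneg (g' η))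
    have hboundary_t : |g t * s t| ≤ |g t| / |a| := by
      rw [abs_mul, div_eq_mul_one_div]
      exact mul_le_mul_of_nonneg_left (hs_le t) (abs_nonneg (g t))
    rw [MeasureTheory.integral_div] at htail
    calc |0 - g t * s t - ∫ η in Ioi t, g' η * s η|
        ≤ |g t * s t| + |∫ η in Ioi t, g' η * s η| := by
          rw [zero_sub, ← neg_add', abs_neg]; exact abs_add_le _ _
      _ ≤ (|g t| + ∫ η in Ioi t, |g' η|) / |a| := by rw [add_div]; gcongr

section Kernel

variable {b c : ℝ}

lemma hasDerivAt_log_one_add_mul_sq_div (hb : 0 < b) (hc : 0 < c) (x : ℝ) :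
    HasDerivAt (fun y => log (1 + b * y ^ 2 / c) / b) (2 * x / (b * x ^ 2 + c)) x := by
  have hpos : 0 < 1 + b * x ^ 2 / c := by positivity
  refine ((((hasDerivAt_pow 2 x).const_mul b).div_const c).const_add 1).log hpos.ne'
    |>.div_const b |>.congr_deriv ?_
  field_simp
  ring

lemma hasDerivAt_two_mul_div_mul_sq_add (hb : 0 ≤ b) (hc : 0 < c) (x : ℝ) :
    HasDerivAt (fun y => 2 * y / (b * y ^ 2 + c))
      ((2 * c - 2 * b * x ^ 2) / (b * x ^ 2 + c) ^ 2) x := by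
  have hpos : 0 < b * x ^ 2 + c := by positivity
  refine ((hasDerivAt_id' x).const_mul 2).div (((hasDerivAt_pow 2 x).const_mul b).add_const c)
    hpos.ne' |>.congr_deriv ?_
  push_cast
  ring

lemma abs_two_mul_div_mul_sq_add_le (hb : 0 < b) (hc : 0 ≤ c) {x : ℝ} (hx : 0 < x) :
    |2 * x / (b * x ^ 2 + c)| ≤ 2 / (b * x) := by
  rw [abs_of_nonneg (by positivity), div_le_div_iff₀ (by positivity) (by positivity)]
  nlinarith [mul_nonneg hc hx.le]

lemma abs_deriv_two_mul_div_mul_sq_add_le (hb : 0 < b) (hc : 0 ≤ c) {x : ℝ} (hx : 0 < x) :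
    |(2 * c - 2 * b * x ^ 2) / (b * x ^ 2 + c) ^ 2| ≤ 2 / b * x ^ (-2 : ℝ) := by
  have hpos : 0 < b * x ^ 2 + c := by positivity
  have hnum : |2 * c - 2 * b * x ^ 2| ≤ 2 * (b * x ^ 2 + c) := by
    rw [abs_le]; constructor <;> nlinarith [sq_nonneg x]
  calc |(2 * c - 2 * b * x ^ 2) / (b * x ^ 2 + c) ^ 2|
      ≤ 2 * (b * x ^ 2 + c) / (b * x ^ 2 + c) ^ 2 := by
        rw [abs_div, abs_of_pos (pow_pos hpos 2)]; gcongr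
    _ = 2 / (b * x ^ 2 + c) := by field_simp
    _ ≤ 2 / (b * x ^ 2) := by gcongr; linarith
    _ = 2 / b * x ^ (-2 : ℝ) := by rw [rpow_neg hx.le, rpow_two]; field_simp

lemma tendsto_two_mul_div_mul_sq_add_atTop (hb : 0 < b) (hc : 0 ≤ c) :
    Tendsto (fun y => 2 * y / (b * y ^ 2 + c)) atTop (𝓝 0) := by
  refine squeeze_zero_norm' ?_ ((tendsto_inv_atTop_zero.const_mul (2 / b)).trans (by simp))
  filter_upwards [eventually_gt_atTop 0] with y hy
  rw [Real.norm_eq_abs, ← div_eq_mul_inv, div_div]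
  exact abs_two_mul_div_mul_sq_add_le hb hc hy

lemma integrableOn_Ioi_rpow_neg_two_const_mul (b : ℝ) {t : ℝ} (ht : 0 < t) :
    IntegrableOn (fun x : ℝ => 2 / b * x ^ (-2 : ℝ)) (Ioi t) :=
  (integrableOn_Ioi_rpow_of_lt (by norm_num) ht).const_mul _

lemma integrableOn_Ioi_deriv_two_mul_div_mul_sq_add (hb : 0 < b) (hc : 0 < c) {t : ℝ}
    (ht : 0 < t) :
    IntegrableOn (fun x => (2 * c - 2 * b * x ^ 2) / (b * x ^ 2 + c) ^ 2) (Ioi t) := by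
  refine (integrableOn_Ioi_rpow_neg_two_const_mul b ht).mono' ?_ ?_
  · exact Continuous.aestronglyMeasurable (by fun_prop (disch := intro x; positivity))
  · exact (ae_restrict_iff' measurableSet_Ioi).2 <| ae_of_all _ fun x hx =>
      abs_deriv_two_mul_div_mul_sq_add_le hb hc.le (ht.trans hx)

lemma integral_Ioi_abs_deriv_two_mul_div_mul_sq_add_le (hb : 0 < b) (hc : 0 < c) {t : ℝ}
    (ht : 0 < t) :
    ∫ x in Ioi t, |(2 * c - 2 * b * x ^ 2) / (b * x ^ 2 + c) ^ 2| ≤ 2 / (b * t) := by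
  calc ∫ x in Ioi t, |(2 * c - 2 * b * x ^ 2) / (b * x ^ 2 + c) ^ 2|
      ≤ ∫ x in Ioi t, 2 / b * x ^ (-2 : ℝ) :=
        setIntegral_mono_on (integrableOn_Ioi_deriv_two_mul_div_mul_sq_add hb hc ht).abs
          (integrableOn_Ioi_rpow_neg_two_const_mul b ht) measurableSet_Ioi
          fun x hx => abs_deriv_two_mul_div_mul_sq_add_le hb hc.le (ht.trans hx)
    _ = 2 / (b * t) := by
        rw [MeasureTheory.integral_const_mul, integral_Ioi_rpow_of_lt (by norm_num) ht]
        norm_num [rpow_neg_one]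
        field_simp

lemma exists_tendsto_integral_two_mul_div_mul_sq_add_mul_cos (hb : 0 < b) (hc : 0 < c) {a : ℝ}
    (ha : 0 < a) :
    ∃ F, Tendsto (fun R => ∫ η in (0 : ℝ)..R, 2 * η / (b * η ^ 2 + c) * cos (a * η)) atTop (𝓝 F) ∧
      |F| ≤ (log (1 + b / (c * a ^ 2)) + 4) / b := by
  set g : ℝ → ℝ := fun η => 2 * η / (b * η ^ 2 + c)
  have hg_cont : Continuous g := by fun_prop (disch := intro x; positivity)
  have hgcos_cont : Continuous fun η => g η * cos (a * η) := by fun_prop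
  have ht : 0 < a⁻¹ := inv_pos.2 ha
  obtain ⟨T, hT, hT_le⟩ := exists_tendsto_intervalIntegral_mul_cos (g := g) ha.ne'
    (fun x _ => hasDerivAt_two_mul_div_mul_sq_add hb.le hc x)
    (integrableOn_Ioi_deriv_two_mul_div_mul_sq_add hb hc ht)
    (tendsto_two_mul_div_mul_sq_add_atTop hb hc.le)
  have hnear : |∫ η in (0 : ℝ)..a⁻¹, g η * cos (a * η)| ≤ log (1 + b / (c * a ^ 2)) / b :=
    calc |∫ η in (0 : ℝ)..a⁻¹, g η * cos (a * η)|
        ≤ ∫ η in (0 : ℝ)..a⁻¹, |g η * cos (a * η)| := abs_integral_le_integral_abs ht.le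
      _ ≤ ∫ η in (0 : ℝ)..a⁻¹, g η := by
          refine integral_mono_on ht.le (hgcos_cont.abs.intervalIntegrable _ _)
            (hg_cont.intervalIntegrable _ _) fun x hx => ?_
          have hgx : 0 ≤ g x := div_nonneg (by linarith [hx.1]) (by positivity)
          rw [abs_mul, abs_of_nonneg hgx]
          exact mul_le_of_le_one_right hgx (abs_cos_le_one _)
      _ = log (1 + b / (c * a ^ 2)) / b := by
          rw [integral_eq_sub_of_hasDerivAt (fun x _ => hasDerivAt_log_one_add_mul_sq_div hb hc x)
            (hg_cont.intervalIntegrable _ _)]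
          field_simp
          simp
  have htail : |T| ≤ 4 / b := by
    have hgt : |g a⁻¹| ≤ 2 / (b * a⁻¹) := abs_two_mul_div_mul_sq_add_le hb hc.le ht
    calc |T| ≤ (2 / (b * a⁻¹) + 2 / (b * a⁻¹)) / |a| :=
          hT_le.trans (by gcongr; exact integral_Ioi_abs_deriv_two_mul_div_mul_sq_add_le hb hc ht)
      _ = 4 / b := by rw [abs_of_pos ha]; field_simp; ring
  refine ⟨(∫ η in (0 : ℝ)..a⁻¹, g η * cos (a * η)) + T, ?_, ?_⟩
  · exact (hT.const_add _).congr fun R =>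
      integral_add_adjacent_intervals (hgcos_cont.intervalIntegrable _ _)
        (hgcos_cont.intervalIntegrable _ _)
  · calc |(∫ η in (0 : ℝ)..a⁻¹, g η * cos (a * η)) + T|
        ≤ |∫ η in (0 : ℝ)..a⁻¹, g η * cos (a * η)| + |T| := abs_add_le _ _
      _ ≤ (log (1 + b / (c * a ^ 2)) + 4) / b := by rw [add_div]; gcongr

end Kernel

lemma cos_mul_abs (x w : ℝ) : cos (x * |w|) = cos (x * w) := by
  rcases abs_choice w with h | h <;> simp [h]

/-- Logarithmic bound for the conditionally convergent Fourier integral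
`F(w) = ∫_0^∞ 2η cos(2πηw)/(8π²η²+2μ) dη`, for `0 < |w| ≤ 1/2`. -/
theorem stmt_19 (μ : ℝ) (hμ : 0 < μ) :
    ∃ C > (0:ℝ), ∀ w : ℝ, 0 < |w| → |w| ≤ 1/2 →
      ∃ F : ℝ,
        Tendsto (fun R : ℝ =>
            ∫ η in (0:ℝ)..R, 2 * η * Real.cos (2 * Real.pi * η * w) /
              (8 * Real.pi ^ 2 * η ^ 2 + 2 * μ)) atTop (nhds F) ∧
        |F| ≤ C * Real.log (1 / |w|) := by
  set D := log (1 + 1 / μ) + 4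
  have hD : 0 ≤ D := add_nonneg (log_nonneg (by simp [hμ.le])) (by norm_num)
  have hlog2 : 0 < log 2 := log_pos one_lt_two
  refine ⟨(D / log 2 + 2) / (8 * π ^ 2), by positivity, fun w hw hw2 => ?_⟩
  obtain ⟨F, hF, hF_le⟩ := exists_tendsto_integral_two_mul_div_mul_sq_add_mul_cos
    (b := 8 * π ^ 2) (c := 2 * μ) (by positivity) (by positivity) (a := 2 * π * |w|) (by positivity)
  have hintegrand (η : ℝ) : 2 * η * cos (2 * π * η * w) / (8 * π ^ 2 * η ^ 2 + 2 * μ) =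
      2 * η / (8 * π ^ 2 * η ^ 2 + 2 * μ) * cos (2 * π * |w| * η) := by
    rw [mul_right_comm (2 * π) |w|, cos_mul_abs]; ring
  refine ⟨F, by simpa only [hintegrand] using hF, ?_⟩
  set L := log (1 / |w|)
  have hL : log 2 ≤ L := log_le_log two_pos (by rw [le_div_iff₀ hw]; linarith)
  have hlog : log (1 + 8 * π ^ 2 / (2 * μ * (2 * π * |w|) ^ 2)) ≤ log (1 + 1 / μ) + 2 * L := by
    have hw1 : |w| ^ 2 ≤ 1 := by nlinarith
    rw [← log_rpow (by positivity), ← log_mul (by positivity) (by positivity)]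
    refine log_le_log (by positivity) ?_
    rw [rpow_two, div_pow, one_pow]
    field_simp
    nlinarith
  have hDL : D ≤ D / log 2 * L := by
    rw [div_mul_eq_mul_div, le_div_iff₀ hlog2]; exact mul_le_mul_of_nonneg_left hL hD
  calc |F| ≤ (log (1 + 8 * π ^ 2 / (2 * μ * (2 * π * |w|) ^ 2)) + 4) / (8 * π ^ 2) := hF_le
    _ ≤ (D / log 2 * L + 2 * L) / (8 * π ^ 2) := by gcongr ?_ / _; linarith
    _ = (D / log 2 + 2) / (8 * π ^ 2) * L := by ring
end
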